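/- arXiv:2207.05964 — 13 statements merged into one kernel-verified Lean document; each statement's English description precedes it below -/
import Mathlib

section
/- Suppose R0 > C/(C - V_L). Then the point x1 := 1 - C/(R0·(C - V_L)) satisfies 0 < x1 < 1 - 1/R0, and (x1, 0) is an equilibrium of the co-evolutionary vector field, i.e. G(x1, 0) = (0, 0). -/
section EndemicEquilibrium

variable {C V_L R0 : ℝ}

lemma one_lt_div_sub_of_pos_of_lt (hL : 0 < V_L) (hC : V_L < C) : 1 < C / (C - V_L) := by
  rw [one_lt_div (sub_pos.mpr hC)]
  linarith

lemma endemic_level_bounds (hL : 0 < V_L) (hC : V_L < C) (hR : C / (C - V_L) < R0) :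
    0 < 1 - C / (R0 * (C - V_L)) ∧ 1 - C / (R0 * (C - V_L)) < 1 - 1 / R0 := by
  have hCL : 0 < C - V_L := sub_pos.mpr hC
  have hR0 : 0 < R0 := by linarith [one_lt_div_sub_of_pos_of_lt hL hC]
  have hR' : C < R0 * (C - V_L) := (div_lt_iff₀ hCL).mp hR
  constructor
  · rw [sub_pos, div_lt_one (by positivity)]
    exact hR'
  · rw [sub_lt_sub_iff_left, div_lt_div_iff₀ hR0 (by positivity)]
    nlinarith [mul_pos hR0 hL]

lemma infection_prob_at_endemic_level (hR0 : R0 ≠ 0) (hC : C ≠ 0) :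
    1 - 1 / (R0 * (1 - (1 - C / (R0 * (C - V_L))))) = V_L / C := by
  rw [sub_sub_cancel, mul_div_assoc', mul_div_mul_left _ _ hR0, one_div_div, sub_div' hC]
  ring

end EndemicEquilibrium

theorem stmt_0_general (C V_H V_L θ R0 : ℝ)
    (hCH : C > V_H) (hHL : V_H > V_L) (hL : V_L > 0)
    (V : ℝ → ℝ) (hV : ∀ n, V n = n * V_H + (1 - n) * V_L)
    (f : ℝ → ℝ)
    (hf1 : ∀ x : ℝ, x < 1 - 1 / R0 → f x = 1 - 1 / (R0 * (1 - x)))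
    (G : ℝ × ℝ → ℝ × ℝ)
    (hG : ∀ p : ℝ × ℝ, G p = (p.1 * (1 - p.1) * (f p.1 * C - V p.2),
        p.2 * (1 - p.2) * (-p.1 + (1 + θ) * (1 - p.1))))
    (hR : R0 > C / (C - V_L)) :
    (0 < 1 - C / (R0 * (C - V_L)) ∧ 1 - C / (R0 * (C - V_L)) < 1 - 1 / R0) ∧
      G (1 - C / (R0 * (C - V_L)), 0) = (0, 0) := by
  have hC : V_L < C := hHL.trans hCH
  have hC0 : C ≠ 0 := by linarith
  have hR0 : R0 ≠ 0 := by linarith [one_lt_div_sub_of_pos_of_lt hL hC]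
  have hbounds := endemic_level_bounds hL hC hR
  refine ⟨hbounds, ?_⟩
  rw [hG, hf1 _ hbounds.2, infection_prob_at_endemic_level hR0 hC0, div_mul_cancel₀ _ hC0, hV]
  simp

theorem stmt_0 (C V_H V_L θ R0 : ℝ)
    (hCH : C > V_H) (hHL : V_H > V_L) (hL : V_L > 0) (hθ : θ > 0) (hR0 : R0 > 1)
    (V : ℝ → ℝ) (hV : ∀ n, V n = n * V_H + (1 - n) * V_L)
    (f : ℝ → ℝ)
    (hf1 : ∀ x : ℝ, x < 1 - 1 / R0 → f x = 1 - 1 / (R0 * (1 - x)))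
    (hf2 : ∀ x : ℝ, x ≥ 1 - 1 / R0 → f x = 0)
    (G : ℝ × ℝ → ℝ × ℝ)
    (hG : ∀ p : ℝ × ℝ, G p = (p.1 * (1 - p.1) * (f p.1 * C - V p.2),
        p.2 * (1 - p.2) * (-p.1 + (1 + θ) * (1 - p.1))))
    (hR : R0 > C / (C - V_L)) :
    (0 < 1 - C / (R0 * (C - V_L)) ∧ 1 - C / (R0 * (C - V_L)) < 1 - 1 / R0) ∧
      G (1 - C / (R0 * (C - V_L)), 0) = (0, 0) :=
  stmt_0_general C V_H V_L θ R0 hCH hHL hL V hV f hf1 G hG hR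
end

section
/- Suppose R0 > C/(C - V_H). Then the point x2 := 1 - C/(R0·(C - V_H)) satisfies 0 < x2 < 1 - 1/R0, and (x2, 1) is an equilibrium of the co-evolutionary vector field, i.e. G(x2, 1) = (0, 0). -/
theorem stmt_1 (C V_H V_L θ R0 : ℝ)
    (hCH : C > V_H) (hHL : V_H > V_L) (hL : V_L > 0) (hθ : θ > 0) (hR0 : R0 > 1)
    (V : ℝ → ℝ) (hV : ∀ n, V n = n * V_H + (1 - n) * V_L)
    (f : ℝ → ℝ)
    (hf1 : ∀ x : ℝ, x < 1 - 1 / R0 → f x = 1 - 1 / (R0 * (1 - x)))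
    (hf2 : ∀ x : ℝ, x ≥ 1 - 1 / R0 → f x = 0)
    (G : ℝ × ℝ → ℝ × ℝ)
    (hG : ∀ p : ℝ × ℝ, G p = (p.1 * (1 - p.1) * (f p.1 * C - V p.2),
        p.2 * (1 - p.2) * (-p.1 + (1 + θ) * (1 - p.1))))
    (hR : R0 > C / (C - V_H)) :
    (0 < 1 - C / (R0 * (C - V_H)) ∧ 1 - C / (R0 * (C - V_H)) < 1 - 1 / R0) ∧
      G (1 - C / (R0 * (C - V_H)), 1) = (0, 0) := by
  have hCV : C - V_H > 0 := by linarith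
  have hC : C > 0 := by linarith
  have hR0p : R0 > 0 := by linarith
  have hden : R0 * (C - V_H) > 0 := by positivity
  -- C / (R0 * (C - V_H)) < 1
  have h1 : C / (R0 * (C - V_H)) < 1 := by
    rw [div_lt_one hden]
    have := (div_lt_iff₀ hCV).mp hR
    nlinarith
  -- 1/R0 < C/(R0*(C-V_H))
  have h2 : 1 / R0 < C / (R0 * (C - V_H)) := by
    rw [div_lt_div_iff₀ hR0p hden]
    nlinarith
  have hx2lt : 1 - C / (R0 * (C - V_H)) < 1 - 1 / R0 := by linarith
  refine ⟨⟨by linarith, hx2lt⟩, ?_⟩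
  rw [hG]
  simp only [hV]
  have hfx : f (1 - C / (R0 * (C - V_H))) = 1 - 1 / (R0 * (1 - (1 - C / (R0 * (C - V_H))))) :=
    hf1 _ hx2lt
  have key : (1 : ℝ) - 1 / (R0 * (1 - (1 - C / (R0 * (C - V_H))))) = V_H / C := by
    have : R0 * (1 - (1 - C / (R0 * (C - V_H)))) = R0 * (C / (R0 * (C - V_H))) := by ring
    rw [this]
    field_simp
    ring
  rw [hfx, key]
  have : V_H / C * C = V_H := by field_simp
  simp [this]
end

section
/- Let x* := (1 + θ)/(2 + θ) and n* := -(C·(2 + θ - R0) + R0·V_L)/(R0·(V_H - V_L)). Then 0 < n* < 1 holds if and only if (2 + θ)·C/(C - V_L) < R0 < (2 + θ)·C/(C - V_H); moreover, under this condition on R0 one has 0 < x* < 1 - 1/R0 and (x*, n*) is an equilibrium of the co-evolutionary vector field, i.e. G(x*, n*) = (0, 0). -/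
theorem stmt_2 (C V_H V_L θ R0 : ℝ)
    (hCH : C > V_H) (hHL : V_H > V_L) (hL : V_L > 0) (hθ : θ > 0) (hR0 : R0 > 1)
    (V : ℝ → ℝ) (hV : ∀ n, V n = n * V_H + (1 - n) * V_L)
    (f : ℝ → ℝ)
    (hf1 : ∀ x : ℝ, x < 1 - 1 / R0 → f x = 1 - 1 / (R0 * (1 - x)))
    (hf2 : ∀ x : ℝ, x ≥ 1 - 1 / R0 → f x = 0)
    (G : ℝ × ℝ → ℝ × ℝ)
    (hG : ∀ p : ℝ × ℝ, G p = (p.1 * (1 - p.1) * (f p.1 * C - V p.2),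
        p.2 * (1 - p.2) * (-p.1 + (1 + θ) * (1 - p.1)))) :
    (0 < -(C * (2 + θ - R0) + R0 * V_L) / (R0 * (V_H - V_L)) ∧
        -(C * (2 + θ - R0) + R0 * V_L) / (R0 * (V_H - V_L)) < 1 ↔
      (2 + θ) * C / (C - V_L) < R0 ∧ R0 < (2 + θ) * C / (C - V_H)) ∧
    ((2 + θ) * C / (C - V_L) < R0 → R0 < (2 + θ) * C / (C - V_H) →
      (0 < (1 + θ) / (2 + θ) ∧ (1 + θ) / (2 + θ) < 1 - 1 / R0) ∧
        G ((1 + θ) / (2 + θ), -(C * (2 + θ - R0) + R0 * V_L) / (R0 * (V_H - V_L))) = (0, 0)) := by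
  have hR0' : (0:ℝ) < R0 := by linarith
  have hHL' : (0:ℝ) < V_H - V_L := by linarith
  have hD : (0:ℝ) < R0 * (V_H - V_L) := mul_pos hR0' hHL'
  have hCL : (0:ℝ) < C - V_L := by linarith
  have hCHp : (0:ℝ) < C - V_H := by linarith
  constructor
  · constructor
    · rintro ⟨h1, h2⟩
      rw [div_pos_iff] at h1
      rcases h1 with ⟨h1, _⟩ | ⟨_, h⟩
      swap
      · linarith
      rw [div_lt_one hD] at h2
      constructor
      · rw [div_lt_iff₀ hCL]; nlinarith
      · rw [lt_div_iff₀ hCHp]; nlinarith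
    · rintro ⟨h1, h2⟩
      rw [div_lt_iff₀ hCL] at h1
      rw [lt_div_iff₀ hCHp] at h2
      constructor
      · apply div_pos _ hD; nlinarith
      · rw [div_lt_one hD]; nlinarith
  · intro h1 h2
    rw [div_lt_iff₀ hCL] at h1
    have h2θ : (0:ℝ) < 2 + θ := by linarith
    have hR2θ : 2 + θ < R0 := by nlinarith
    have hxlt : (1 + θ) / (2 + θ) < 1 - 1 / R0 := by
      have hx : (1 + θ) / (2 + θ) = 1 - 1 / (2 + θ) := by field_simp; ring
      have : 1 / R0 < 1 / (2 + θ) := one_div_lt_one_div_of_lt h2θ hR2θ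
      rw [hx]; linarith
    refine ⟨⟨by positivity, hxlt⟩, ?_⟩
    rw [hG, hf1 _ hxlt, hV]
    have e1 : (1 - 1 / (R0 * (1 - (1 + θ) / (2 + θ)))) * C -
        (-(C * (2 + θ - R0) + R0 * V_L) / (R0 * (V_H - V_L)) * V_H +
          (1 - -(C * (2 + θ - R0) + R0 * V_L) / (R0 * (V_H - V_L))) * V_L) = 0 := by
      have h1x : (1:ℝ) - (1 + θ) / (2 + θ) = 1 / (2 + θ) := by field_simp; ring
      rw [h1x]
      field_simp
      ring
    have e2 : -((1 + θ) / (2 + θ)) + (1 + θ) * (1 - (1 + θ) / (2 + θ)) = 0 := by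
      field_simp
      ring
    simp only [Prod.mk.injEq, e1, e2, mul_zero]
end

section
/- Suppose R0 > C/(C - V_L) and let x1 := 1 - C/(R0·(C - V_L)). Then G is differentiable at (x1, 0) and its Jacobian matrix there is the upper-triangular matrix with diagonal entries A := -C·(1 - 1/R0) + V_L and B := (C·(2 + θ - R0) + R0·V_L)/(R0·(C - V_L)), upper-right entry x1·(x1 - 1)·(V_H - V_L), and lower-left entry 0. Moreover A < 0, and both diagonal entries (hence both eigenvalues) are negative if and only if R0 > (2 + θ)·C/(C - V_L). -/
/-!
Because `V_L > 0`, the point `x1` lies strictly below the threshold `1 - 1/R0`, so near `(x1, 0)` the infection probability is `1 - 1/(R0 (1 - x))` and `G` coincides with a polynomial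
map. The Jacobian is then read off from the partial derivatives of that polynomial map. Evaluated
at `x1`, the diagonal entries are `C/R0 - (C - V_L)` and `(2 + θ) C / (R0 (C - V_L)) - 1`, whose
signs are those of `C/(C - V_L) - R0` and `(2 + θ) C/(C - V_L) - R0`.
-/

open Filter Topology

section PartialDerivatives

variable {F : Type*} [NormedAddCommGroup F] [NormedSpace ℝ F] {g : ℝ × ℝ → F} {x n : ℝ} {w : F}

theorem fderiv_apply_one_zero_of_hasDerivAt (hg : DifferentiableAt ℝ g (x, n))
    (h : HasDerivAt (fun t => g (t, n)) w x) : fderiv ℝ g (x, n) (1, 0) = w :=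
  (hg.hasFDerivAt.comp_hasDerivAt x ((hasDerivAt_id x).prodMk (hasDerivAt_const x n))).unique h

theorem fderiv_apply_zero_one_of_hasDerivAt (hg : DifferentiableAt ℝ g (x, n))
    (h : HasDerivAt (fun t => g (x, t)) w n) : fderiv ℝ g (x, n) (0, 1) = w :=
  (hg.hasFDerivAt.comp_hasDerivAt n ((hasDerivAt_const n x).prodMk (hasDerivAt_id n))).unique h

end PartialDerivatives

section LocalField

variable {C V_H V_L θ R0 : ℝ}

/-- The co-evolutionary field on `x < 1 - 1/R0`, where `x (1 - x) f(x) C = x (1 - x) C - x C / R0`. -/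
noncomputable def localField (C V_H V_L θ R0 : ℝ) (p : ℝ × ℝ) : ℝ × ℝ :=
  (p.1 * (1 - p.1) * (C - (p.2 * V_H + (1 - p.2) * V_L)) - p.1 * (C / R0),
    p.2 * (1 - p.2) * ((1 + θ) - (2 + θ) * p.1))

theorem differentiable_localField : Differentiable ℝ (localField C V_H V_L θ R0) := by
  unfold localField
  fun_prop

theorem eventuallyEq_localField (hR0 : 0 < R0) {V f : ℝ → ℝ} {G : ℝ × ℝ → ℝ × ℝ}
    (hV : ∀ n, V n = n * V_H + (1 - n) * V_L)
    (hf : ∀ x : ℝ, x < 1 - 1 / R0 → f x = 1 - 1 / (R0 * (1 - x)))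
    (hG : ∀ p : ℝ × ℝ, G p = (p.1 * (1 - p.1) * (f p.1 * C - V p.2),
        p.2 * (1 - p.2) * (-p.1 + (1 + θ) * (1 - p.1))))
    {p : ℝ × ℝ} (hp : p.1 < 1 - 1 / R0) : G =ᶠ[𝓝 p] localField C V_H V_L θ R0 := by
  filter_upwards [(isOpen_lt continuous_fst continuous_const).mem_nhds hp] with q hq
  have hq' : q.1 < 1 - 1 / R0 := hq
  have hq1 : 1 - q.1 ≠ 0 := (by linarith [one_div_pos.2 hR0] : (0 : ℝ) < 1 - q.1).ne'
  rw [hG, hf _ hq', hV, localField, Prod.mk.injEq]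
  exact ⟨by field_simp; ring, by ring⟩

theorem hasDerivAt_localField_fst (x n : ℝ) :
    HasDerivAt (fun t => localField C V_H V_L θ R0 (t, n))
      ((1 - 2 * x) * (C - (n * V_H + (1 - n) * V_L)) - C / R0, -(n * (1 - n) * (2 + θ))) x := by
  have hid := hasDerivAt_id' x
  refine HasDerivAt.prodMk ?_ ?_
  · exact (((hid.mul (hid.const_sub 1)).mul_const (C - (n * V_H + (1 - n) * V_L))).sub
      (hid.mul_const (C / R0))).congr_deriv (by ring)
  · exact (((hid.const_mul (2 + θ)).const_sub (1 + θ)).const_mul (n * (1 - n))).congr_deriv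
      (by ring)

theorem hasDerivAt_localField_snd (x n : ℝ) :
    HasDerivAt (fun t => localField C V_H V_L θ R0 (x, t))
      (x * (x - 1) * (V_H - V_L), (1 - 2 * n) * ((1 + θ) - (2 + θ) * x)) n := by
  have hid := hasDerivAt_id' n
  refine HasDerivAt.prodMk ?_ ?_
  · exact (((((hid.mul_const V_H).add ((hid.const_sub 1).mul_const V_L)).const_sub C).const_mul
      (x * (1 - x))).sub_const (x * (C / R0))).congr_deriv (by ring)
  · exact ((hid.mul (hid.const_sub 1)).mul_const ((1 + θ) - (2 + θ) * x)).congr_deriv (by ring)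

end LocalField

section Equilibrium

variable {C V_L θ R0 : ℝ}

theorem one_sub_div_mul_lt_one_sub_one_div (hR0 : 0 < R0) (hCL : 0 < C - V_L) (hL : 0 < V_L) :
    1 - C / (R0 * (C - V_L)) < 1 - 1 / R0 := by
  rw [sub_lt_sub_iff_left, div_lt_div_iff₀ hR0 (by positivity)]
  nlinarith

theorem neg_mul_one_sub_one_div_add_neg_iff (hR0 : 0 < R0) (hCL : 0 < C - V_L) :
    -C * (1 - 1 / R0) + V_L < 0 ↔ C / (C - V_L) < R0 := by
  rw [show -C * (1 - 1 / R0) + V_L = C / R0 - (C - V_L) by ring, sub_neg, div_lt_iff₀ hR0,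
    div_lt_iff₀ hCL, mul_comm]

theorem mul_sub_add_mul_div_neg_iff (hR0 : 0 < R0) (hCL : 0 < C - V_L) :
    (C * (2 + θ - R0) + R0 * V_L) / (R0 * (C - V_L)) < 0 ↔ (2 + θ) * C / (C - V_L) < R0 := by
  rw [div_lt_iff₀ (by positivity), zero_mul, div_lt_iff₀ hCL]
  constructor <;> intro h <;> linarith

end Equilibrium

theorem stmt_4_general (C V_H V_L θ R0 : ℝ)
    (hCH : C > V_H) (hHL : V_H > V_L) (hL : V_L > 0) (hR0 : R0 > 1)
    (V : ℝ → ℝ) (hV : ∀ n, V n = n * V_H + (1 - n) * V_L)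
    (f : ℝ → ℝ)
    (hf1 : ∀ x : ℝ, x < 1 - 1 / R0 → f x = 1 - 1 / (R0 * (1 - x)))
    (G : ℝ × ℝ → ℝ × ℝ)
    (hG : ∀ p : ℝ × ℝ, G p = (p.1 * (1 - p.1) * (f p.1 * C - V p.2),
        p.2 * (1 - p.2) * (-p.1 + (1 + θ) * (1 - p.1))))
    (hR : R0 > C / (C - V_L))
    (x1 A B : ℝ) (hx1 : x1 = 1 - C / (R0 * (C - V_L)))
    (hA : A = -C * (1 - 1 / R0) + V_L)
    (hB : B = (C * (2 + θ - R0) + R0 * V_L) / (R0 * (C - V_L))) :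
    DifferentiableAt ℝ G (x1, 0) ∧
    fderiv ℝ G (x1, 0) (1, 0) = (A, 0) ∧
    fderiv ℝ G (x1, 0) (0, 1) = (x1 * (x1 - 1) * (V_H - V_L), B) ∧
    A < 0 ∧
    (A < 0 ∧ B < 0 ↔ R0 > (2 + θ) * C / (C - V_L)) := by
  have hCL : 0 < C - V_L := by linarith
  have hR0' : 0 < R0 := by linarith
  have hloc : G =ᶠ[𝓝 (x1, 0)] localField C V_H V_L θ R0 :=
    eventuallyEq_localField hR0' hV hf1 hG (hx1 ▸ one_sub_div_mul_lt_one_sub_one_div hR0' hCL hL)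
  have hdiff : DifferentiableAt ℝ (localField C V_H V_L θ R0) (x1, 0) :=
    differentiable_localField _
  have hA0 : A < 0 := hA ▸ (neg_mul_one_sub_one_div_add_neg_iff hR0' hCL).2 hR
  refine ⟨hloc.differentiableAt_iff.2 hdiff, ?_, ?_, hA0, ?_⟩
  · rw [hloc.fderiv_eq, fderiv_apply_one_zero_of_hasDerivAt hdiff (hasDerivAt_localField_fst _ _)]
    refine Prod.ext ?_ (by ring)
    rw [hA, hx1]
    field_simp
    ring
  · rw [hloc.fderiv_eq, fderiv_apply_zero_one_of_hasDerivAt hdiff (hasDerivAt_localField_snd _ _)]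
    congr 1
    rw [hB, hx1]
    field_simp
    ring
  · rw [hB, mul_sub_add_mul_div_neg_iff hR0' hCL]
    exact and_iff_right hA0

theorem stmt_4 (C V_H V_L θ R0 : ℝ)
    (hCH : C > V_H) (hHL : V_H > V_L) (hL : V_L > 0) (hθ : θ > 0) (hR0 : R0 > 1)
    (V : ℝ → ℝ) (hV : ∀ n, V n = n * V_H + (1 - n) * V_L)
    (f : ℝ → ℝ)
    (hf1 : ∀ x : ℝ, x < 1 - 1 / R0 → f x = 1 - 1 / (R0 * (1 - x)))
    (hf2 : ∀ x : ℝ, x ≥ 1 - 1 / R0 → f x = 0)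
    (G : ℝ × ℝ → ℝ × ℝ)
    (hG : ∀ p : ℝ × ℝ, G p = (p.1 * (1 - p.1) * (f p.1 * C - V p.2),
        p.2 * (1 - p.2) * (-p.1 + (1 + θ) * (1 - p.1))))
    (hR : R0 > C / (C - V_L))
    (x1 A B : ℝ) (hx1 : x1 = 1 - C / (R0 * (C - V_L)))
    (hA : A = -C * (1 - 1 / R0) + V_L)
    (hB : B = (C * (2 + θ - R0) + R0 * V_L) / (R0 * (C - V_L))) :
    DifferentiableAt ℝ G (x1, 0) ∧
    fderiv ℝ G (x1, 0) (1, 0) = (A, 0) ∧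
    fderiv ℝ G (x1, 0) (0, 1) = (x1 * (x1 - 1) * (V_H - V_L), B) ∧
    A < 0 ∧
    (A < 0 ∧ B < 0 ↔ R0 > (2 + θ) * C / (C - V_L)) :=
  stmt_4_general C V_H V_L θ R0 hCH hHL hL hR0 V hV f hf1 G hG hR x1 A B hx1 hA hB
end

section
/- Suppose R0 > C/(C - V_H) and let x2 := 1 - C/(R0·(C - V_H)). Then G is differentiable at (x2, 1) and its Jacobian matrix there is the upper-triangular matrix with diagonal entries A := -C·(1 - 1/R0) + V_H and B := -(C·(2 + θ - R0) + R0·V_H)/(R0·(C - V_H)), upper-right entry x2·(x2 - 1)·(V_H - V_L), and lower-left entry 0. Moreover A < 0, and both diagonal entries (hence both eigenvalues) are negative if and only if R0 < (2 + θ)·C/(C - V_H). -/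
/-!
At `x2` the infection probability `f` is given by its smooth branch, and `x2` is exactly the
point where the payoff difference `f x * C - V_H` of the first component vanishes. Hence in the
`x`-direction the product rule leaves only `x2 * (1 - x2) * f' x2 * C`, and the second
component, carrying the factor `n * (1 - n)`, vanishes identically on the line `n = 1`, which
makes the Jacobian upper triangular. The sign conditions are then linear inequalities in `R0`.
-/

section PartialDerivatives

variable {𝕜 E : Type*} [NontriviallyNormedField 𝕜] [NormedAddCommGroup E] [NormedSpace 𝕜 E]
  {G : 𝕜 × 𝕜 → E} {x y : 𝕜} {a : E}

theorem fderiv_apply_one_zero_of_hasDerivAt_s5 (hG : DifferentiableAt 𝕜 G (x, y))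
    (ha : HasDerivAt (fun x' => G (x', y)) a x) : fderiv 𝕜 G (x, y) (1, 0) = a :=
  (hG.hasFDerivAt.comp_hasDerivAt x ((hasDerivAt_id x).prodMk (hasDerivAt_const x y))).unique ha

theorem fderiv_apply_zero_one_of_hasDerivAt_s5 (hG : DifferentiableAt 𝕜 G (x, y))
    (ha : HasDerivAt (fun y' => G (x, y')) a y) : fderiv 𝕜 G (x, y) (0, 1) = a :=
  (hG.hasFDerivAt.comp_hasDerivAt y ((hasDerivAt_const y x).prodMk (hasDerivAt_id y))).unique ha

end PartialDerivatives

theorem HasDerivAt.mul_of_eq_zero_right {𝕜 : Type*} [NontriviallyNormedField 𝕜] {h g : 𝕜 → 𝕜}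
    {h' g' x : 𝕜} (hh : HasDerivAt h h' x) (hg : HasDerivAt g g' x) (hgx : g x = 0) :
    HasDerivAt (fun y => h y * g y) (h x * g') x :=
  (hh.mul hg).congr_deriv (by rw [hgx, mul_zero, zero_add])

theorem hasDerivAt_one_sub_one_div_mul_one_sub {R0 x : ℝ} (hR0 : R0 ≠ 0) (hx : 1 - x ≠ 0) :
    HasDerivAt (fun x => 1 - 1 / (R0 * (1 - x))) (-1 / (R0 * (1 - x) ^ 2)) x := by
  have hden : HasDerivAt (fun x => R0 * (1 - x)) (-R0) x := by
    simpa using ((hasDerivAt_id x).const_sub 1).const_mul R0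
  exact (((hasDerivAt_const x 1).div hden (mul_ne_zero hR0 hx)).const_sub 1).congr_deriv
    (by field_simp; ring)

theorem hasDerivAt_of_forall_lt_eq_one_sub_one_div {f : ℝ → ℝ} {R0 x : ℝ} (hR0 : 0 < R0)
    (hf : ∀ x, x < 1 - 1 / R0 → f x = 1 - 1 / (R0 * (1 - x))) (hx : x < 1 - 1 / R0) :
    HasDerivAt f (-1 / (R0 * (1 - x) ^ 2)) x := by
  have h1x : 1 - x ≠ 0 := by
    have : 0 < 1 / R0 := by positivity
    linarith
  exact (hasDerivAt_one_sub_one_div_mul_one_sub hR0.ne' h1x).congr_of_eventuallyEq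
    ((eventually_lt_nhds hx).mono hf)

theorem hasDerivAt_coevolution_along_x {f : ℝ → ℝ} {f' x2 C V_H : ℝ} (hf : HasDerivAt f f' x2)
    (hf0 : f x2 * C - V_H = 0) :
    HasDerivAt (fun x => (x * (1 - x) * (f x * C - V_H), (0 : ℝ))) (x2 * (1 - x2) * (f' * C), 0)
      x2 :=
  (((hasDerivAt_id x2).mul ((hasDerivAt_id x2).const_sub 1)).mul_of_eq_zero_right
    ((hf.mul_const C).sub_const V_H) hf0).prodMk (hasDerivAt_const x2 0)

theorem hasDerivAt_coevolution_along_n (F V_H V_L θ x2 : ℝ) :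
    HasDerivAt (fun n => (x2 * (1 - x2) * (F - (n * V_H + (1 - n) * V_L)),
        n * (1 - n) * (-x2 + (1 + θ) * (1 - x2))))
      (x2 * (x2 - 1) * (V_H - V_L), -(-x2 + (1 + θ) * (1 - x2))) 1 := by
  have h₁ := (((hasDerivAt_id (1 : ℝ)).mul_const V_H).add
    (((hasDerivAt_id (1 : ℝ)).const_sub 1).mul_const V_L)).const_sub F
  have h₂ := ((hasDerivAt_id (1 : ℝ)).mul ((hasDerivAt_id (1 : ℝ)).const_sub 1)).mul_const
    (-x2 + (1 + θ) * (1 - x2))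
  exact ((h₁.const_mul (x2 * (1 - x2))).prodMk h₂).congr_deriv (Prod.ext (by ring) (by simp))

section InteriorEquilibrium

variable {C V_H R0 x2 : ℝ}

theorem lt_one_sub_one_div (hVH : 0 < V_H) (hCH : V_H < C) (hR0 : 0 < R0)
    (hx2 : x2 = 1 - C / (R0 * (C - V_H))) : x2 < 1 - 1 / R0 := by
  have : 1 / R0 < C / (R0 * (C - V_H)) := by
    rw [div_lt_div_iff₀ hR0 (mul_pos hR0 (sub_pos.mpr hCH))]
    nlinarith
  linarith

theorem one_sub_one_div_mul_one_sub_mul_sub_eq_zero (hVH : 0 < V_H) (hCH : V_H < C)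
    (hR0 : 0 < R0) (hx2 : x2 = 1 - C / (R0 * (C - V_H))) :
    (1 - 1 / (R0 * (1 - x2))) * C - V_H = 0 := by
  have hC : C ≠ 0 := by linarith
  have hCV := (sub_pos.mpr hCH).ne'
  rw [hx2, sub_sub_cancel]; field_simp; ring

theorem mul_one_sub_mul_neg_one_div_mul_eq (hVH : 0 < V_H) (hCH : V_H < C) (hR0 : 0 < R0)
    (hx2 : x2 = 1 - C / (R0 * (C - V_H))) :
    x2 * (1 - x2) * (-1 / (R0 * (1 - x2) ^ 2) * C) = -C * (1 - 1 / R0) + V_H := by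
  have hC : C ≠ 0 := by linarith
  have hCV := (sub_pos.mpr hCH).ne'
  rw [hx2, sub_sub_cancel]; field_simp; ring

theorem neg_neg_add_mul_one_sub_eq (θ : ℝ) (hCH : V_H < C) (hR0 : 0 < R0)
    (hx2 : x2 = 1 - C / (R0 * (C - V_H))) :
    -(-x2 + (1 + θ) * (1 - x2)) = -(C * (2 + θ - R0) + R0 * V_H) / (R0 * (C - V_H)) := by
  have := (sub_pos.mpr hCH).ne'
  rw [hx2]; field_simp; ring

theorem neg_mul_one_sub_one_div_add_neg (hRC : C < R0 * (C - V_H)) (hR0 : 0 < R0) :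
    -C * (1 - 1 / R0) + V_H < 0 := by
  have : C / R0 < C - V_H := (div_lt_iff₀ hR0).mpr (by linarith)
  have : -C * (1 - 1 / R0) + V_H = C / R0 - (C - V_H) := by field_simp; ring
  linarith

theorem div_neg_iff_lt (θ : ℝ) (hCH : V_H < C) (hR0 : 0 < R0) :
    -(C * (2 + θ - R0) + R0 * V_H) / (R0 * (C - V_H)) < 0 ↔ R0 < (2 + θ) * C / (C - V_H) := by
  have hCV := sub_pos.mpr hCH
  rw [div_lt_iff₀ (mul_pos hR0 hCV), zero_mul, lt_div_iff₀ hCV]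
  constructor <;> intro h <;> linarith

end InteriorEquilibrium

theorem stmt_5_general (C V_H V_L θ R0 : ℝ)
    (hCH : C > V_H) (hHL : V_H > V_L) (hL : V_L > 0)
    (V : ℝ → ℝ) (hV : ∀ n, V n = n * V_H + (1 - n) * V_L)
    (f : ℝ → ℝ)
    (hf1 : ∀ x : ℝ, x < 1 - 1 / R0 → f x = 1 - 1 / (R0 * (1 - x)))
    (G : ℝ × ℝ → ℝ × ℝ)
    (hG : ∀ p : ℝ × ℝ, G p = (p.1 * (1 - p.1) * (f p.1 * C - V p.2),
        p.2 * (1 - p.2) * (-p.1 + (1 + θ) * (1 - p.1))))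
    (hR : R0 > C / (C - V_H))
    (x2 A B : ℝ) (hx2 : x2 = 1 - C / (R0 * (C - V_H)))
    (hA : A = -C * (1 - 1 / R0) + V_H)
    (hB : B = -(C * (2 + θ - R0) + R0 * V_H) / (R0 * (C - V_H))) :
    DifferentiableAt ℝ G (x2, 1) ∧
    fderiv ℝ G (x2, 1) (1, 0) = (A, 0) ∧
    fderiv ℝ G (x2, 1) (0, 1) = (x2 * (x2 - 1) * (V_H - V_L), B) ∧
    A < 0 ∧
    (A < 0 ∧ B < 0 ↔ R0 < (2 + θ) * C / (C - V_H)) := by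
  have hVH : 0 < V_H := hL.trans hHL
  have hRC : C < R0 * (C - V_H) := (div_lt_iff₀ (sub_pos.mpr hCH)).mp hR
  have hR0 : 0 < R0 := pos_of_mul_pos_left (by linarith) (sub_pos.mpr hCH).le
  have hx2lt := lt_one_sub_one_div hVH hCH hR0 hx2
  have hf' := hasDerivAt_of_forall_lt_eq_one_sub_one_div hR0 hf1 hx2lt
  have hfx2 : f x2 * C - V_H = 0 := by
    rw [hf1 x2 hx2lt]; exact one_sub_one_div_mul_one_sub_mul_sub_eq_zero hVH hCH hR0 hx2
  have hdiff : DifferentiableAt ℝ G (x2, 1) := by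
    have hfd := hf'.differentiableAt
    rw [funext hG, funext hV]
    fun_prop
  have hdx : HasDerivAt (fun x => G (x, 1)) (A, 0) x2 := by
    convert hasDerivAt_coevolution_along_x hf' hfx2 using 1
    · funext x; simp [hG, hV]
    · rw [hA, ← mul_one_sub_mul_neg_one_div_mul_eq hVH hCH hR0 hx2]
  have hdn : HasDerivAt (fun n => G (x2, n)) (x2 * (x2 - 1) * (V_H - V_L), B) 1 := by
    convert hasDerivAt_coevolution_along_n (f x2 * C) V_H V_L θ x2 using 1
    · funext n; simp [hG, hV]
    · rw [hB, neg_neg_add_mul_one_sub_eq θ hCH hR0 hx2]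
  have hAneg : A < 0 := hA ▸ neg_mul_one_sub_one_div_add_neg hRC hR0
  refine ⟨hdiff, fderiv_apply_one_zero_of_hasDerivAt_s5 hdiff hdx,
    fderiv_apply_zero_one_of_hasDerivAt_s5 hdiff hdn, hAneg, ?_⟩
  rw [hB, div_neg_iff_lt θ hCH hR0]
  exact and_iff_right hAneg

theorem stmt_5 (C V_H V_L θ R0 : ℝ)
    (hCH : C > V_H) (hHL : V_H > V_L) (hL : V_L > 0) (hθ : θ > 0) (hR0 : R0 > 1)
    (V : ℝ → ℝ) (hV : ∀ n, V n = n * V_H + (1 - n) * V_L)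
    (f : ℝ → ℝ)
    (hf1 : ∀ x : ℝ, x < 1 - 1 / R0 → f x = 1 - 1 / (R0 * (1 - x)))
    (hf2 : ∀ x : ℝ, x ≥ 1 - 1 / R0 → f x = 0)
    (G : ℝ × ℝ → ℝ × ℝ)
    (hG : ∀ p : ℝ × ℝ, G p = (p.1 * (1 - p.1) * (f p.1 * C - V p.2),
        p.2 * (1 - p.2) * (-p.1 + (1 + θ) * (1 - p.1))))
    (hR : R0 > C / (C - V_H))
    (x2 A B : ℝ) (hx2 : x2 = 1 - C / (R0 * (C - V_H)))
    (hA : A = -C * (1 - 1 / R0) + V_H)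
    (hB : B = -(C * (2 + θ - R0) + R0 * V_H) / (R0 * (C - V_H))) :
    DifferentiableAt ℝ G (x2, 1) ∧
    fderiv ℝ G (x2, 1) (1, 0) = (A, 0) ∧
    fderiv ℝ G (x2, 1) (0, 1) = (x2 * (x2 - 1) * (V_H - V_L), B) ∧
    A < 0 ∧
    (A < 0 ∧ B < 0 ↔ R0 < (2 + θ) * C / (C - V_H)) :=
  stmt_5_general C V_H V_L θ R0 hCH hHL hL V hV f hf1 G hG hR x2 A B hx2 hA hB
end

section
/- Suppose (2 + θ)·C/(C - V_L) < R0 < (2 + θ)·C/(C - V_H), and let x* := (1 + θ)/(2 + θ), n* := -(C·(2 + θ - R0) + R0·V_L)/(R0·(V_H - V_L)). Then G is differentiable at (x*, n*) and its Jacobian matrix there equals [[-(1 + θ)·C/R0, -(1 + θ)(V_H - V_L)/(2 + θ)²], [(2 + θ)(C(2 + θ - R0) + R0·V_H)(C(2 + θ - R0) + R0·V_L)/(R0²·(V_H - V_L)²), 0]], and the determinant of this matrix, which equals (1 + θ)(C(2 + θ - R0) + R0·V_H)(C(2 + θ - R0) + R0·V_L)/((2 + θ)·R0²·(V_H - V_L)),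 is strictly negative; hence (x*, n*) is a saddle point. -/
/-!
Near `x* = (1 + θ)/(2 + θ)` we have `x* < 1 - 1/R0`, so `f` is given by its first formula on a
neighbourhood and `G` agrees there with a polynomial field, since
`x (1 - x) (f x C - V) = x (1 - x) (C - V) - x C / R0`. The Jacobian of that field at the
equilibrium is computed by hand, and the two bounds on `R0` are exactly the statements that
`C (2 + θ - R0) + R0 V_H > 0 > C (2 + θ - R0) + R0 V_L`, which makes the determinant negative.
-/

open Filter Topology ContinuousLinearMap

lemma lt_mul_div_sub_iff {a C v R : ℝ} (hvC : v < C) :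
    R < a * C / (C - v) ↔ 0 < C * (a - R) + R * v := by
  rw [lt_div_iff₀ (sub_pos.mpr hvC)]
  constructor <;> intro h <;> linarith

lemma mul_div_sub_lt_iff {a C v R : ℝ} (hvC : v < C) :
    a * C / (C - v) < R ↔ C * (a - R) + R * v < 0 := by
  rw [div_lt_iff₀ (sub_pos.mpr hvC)]
  constructor <;> intro h <;> linarith

lemma lt_of_mul_div_sub_lt {a C v R : ℝ} (ha : 0 < a) (hv : 0 < v) (hvC : v < C)
    (h : a * C / (C - v) < R) : a < R := by
  rw [mul_div_sub_lt_iff hvC] at h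
  nlinarith

section EndemicField

variable (C V_H V_L θ R0 : ℝ)

/-- The field `G` on the half-plane `x < 1 - 1/R0`, where `f x = 1 - 1/(R0 (1 - x))`. -/
noncomputable def endemicField (p : ℝ × ℝ) : ℝ × ℝ :=
  (p.1 * (1 - p.1) * (C - (p.2 * V_H + (1 - p.2) * V_L)) - p.1 * (C / R0),
    p.2 * (1 - p.2) * ((1 + θ) - (2 + θ) * p.1))

lemma hasFDerivAt_endemicField (p : ℝ × ℝ) :
    HasFDerivAt (endemicField C V_H V_L θ R0)
      ((((1 - 2 * p.1) * (C - (p.2 * V_H + (1 - p.2) * V_L)) - C / R0) • fst ℝ ℝ ℝ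
          + (-(p.1 * (1 - p.1) * (V_H - V_L))) • snd ℝ ℝ ℝ).prod
        ((-((2 + θ) * (p.2 * (1 - p.2)))) • fst ℝ ℝ ℝ
          + ((1 - 2 * p.2) * ((1 + θ) - (2 + θ) * p.1)) • snd ℝ ℝ ℝ)) p := by
  have hx : HasFDerivAt (fun q : ℝ × ℝ => q.1) (fst ℝ ℝ ℝ) p := hasFDerivAt_fst
  have hn : HasFDerivAt (fun q : ℝ × ℝ => q.2) (snd ℝ ℝ ℝ) p := hasFDerivAt_snd
  have h₁ := ((hx.mul (hx.const_sub 1)).mul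
      (((hn.mul_const V_H).add ((hn.const_sub 1).mul_const V_L)).const_sub C)).sub
      (hx.mul_const (C / R0))
  have h₂ := (hn.mul (hn.const_sub 1)).mul ((hx.const_mul (2 + θ)).const_sub (1 + θ))
  refine (h₁.prodMk h₂).congr_fderiv ?_
  ext <;> simp <;> ring

variable {C V_H V_L θ R0}

lemma eventuallyEq_endemicField {V f : ℝ → ℝ} {G : ℝ × ℝ → ℝ × ℝ} (hR0 : 0 < R0)
    (hV : ∀ n, V n = n * V_H + (1 - n) * V_L)
    (hf : ∀ x : ℝ, x < 1 - 1 / R0 → f x = 1 - 1 / (R0 * (1 - x)))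
    (hG : ∀ p : ℝ × ℝ, G p = (p.1 * (1 - p.1) * (f p.1 * C - V p.2),
        p.2 * (1 - p.2) * (-p.1 + (1 + θ) * (1 - p.1))))
    {p : ℝ × ℝ} (hp : p.1 < 1 - 1 / R0) :
    G =ᶠ[𝓝 p] endemicField C V_H V_L θ R0 := by
  filter_upwards [(isOpen_lt continuous_fst continuous_const).mem_nhds hp] with q hq
  have hq₁ : 1 - q.1 ≠ 0 := by
    have : 0 < 1 / R0 := by positivity
    change q.1 < 1 - 1 / R0 at hq
    linarith
  rw [hG q, hf q.1 hq, hV q.2, endemicField, Prod.mk.injEq]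
  constructor
  · field_simp
    ring
  · ring

end EndemicField

theorem stmt_6_general (C V_H V_L θ R0 : ℝ)
    (hCH : C > V_H) (hHL : V_H > V_L) (hL : V_L > 0) (hθ : θ > 0)
    (V : ℝ → ℝ) (hV : ∀ n, V n = n * V_H + (1 - n) * V_L)
    (f : ℝ → ℝ)
    (hf1 : ∀ x : ℝ, x < 1 - 1 / R0 → f x = 1 - 1 / (R0 * (1 - x)))
    (G : ℝ × ℝ → ℝ × ℝ)
    (hG : ∀ p : ℝ × ℝ, G p = (p.1 * (1 - p.1) * (f p.1 * C - V p.2),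
        p.2 * (1 - p.2) * (-p.1 + (1 + θ) * (1 - p.1))))
    (hRlo : (2 + θ) * C / (C - V_L) < R0) (hRhi : R0 < (2 + θ) * C / (C - V_H))
    (xs ns J11 J12 J21 D : ℝ)
    (hxs : xs = (1 + θ) / (2 + θ))
    (hns : ns = -(C * (2 + θ - R0) + R0 * V_L) / (R0 * (V_H - V_L)))
    (hJ11 : J11 = -(1 + θ) * C / R0)
    (hJ12 : J12 = -(1 + θ) * (V_H - V_L) / (2 + θ) ^ 2)
    (hJ21 : J21 = (2 + θ) * (C * (2 + θ - R0) + R0 * V_H) * (C * (2 + θ - R0) + R0 * V_L) /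
        (R0 ^ 2 * (V_H - V_L) ^ 2))
    (hD : D = (1 + θ) * (C * (2 + θ - R0) + R0 * V_H) * (C * (2 + θ - R0) + R0 * V_L) /
        ((2 + θ) * R0 ^ 2 * (V_H - V_L))) :
    DifferentiableAt ℝ G (xs, ns) ∧
    fderiv ℝ G (xs, ns) (1, 0) = (J11, J21) ∧
    fderiv ℝ G (xs, ns) (0, 1) = (J12, 0) ∧
    J11 * 0 - J12 * J21 = D ∧
    D < 0 := by
  have hR0 : 2 + θ < R0 := lt_of_mul_div_sub_lt (by linarith) hL (by linarith) hRlo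
  have hNH : 0 < C * (2 + θ - R0) + R0 * V_H := (lt_mul_div_sub_iff hCH).mp hRhi
  have hNL : C * (2 + θ - R0) + R0 * V_L < 0 := (mul_div_sub_lt_iff (by linarith)).mp hRlo
  have hxs_lt : xs < 1 - 1 / R0 := by
    have : 1 / R0 < 1 / (2 + θ) := one_div_lt_one_div_of_lt (by linarith) hR0
    rw [hxs, show (1 + θ) / (2 + θ) = 1 - 1 / (2 + θ) by field_simp; ring]
    linarith
  have hEq := eventuallyEq_endemicField (by linarith) hV hf1 hG (p := (xs, ns)) hxs_lt
  have hDeriv := hasFDerivAt_endemicField C V_H V_L θ R0 (xs, ns)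
  have hR0ne : R0 ≠ 0 := by linarith
  have hθne : 2 + θ ≠ 0 := by linarith
  have hHLne : V_H - V_L ≠ 0 := by linarith
  refine ⟨hEq.differentiableAt_iff.mpr hDeriv.differentiableAt, ?_, ?_, ?_, ?_⟩
  · rw [hEq.fderiv_eq, hDeriv.fderiv, hJ11, hJ21, hxs, hns]
    simp only [prod_apply, add_apply, smul_apply, coe_fst', coe_snd', smul_eq_mul, Prod.mk.injEq]
    constructor <;> field_simp <;> ring
  · rw [hEq.fderiv_eq, hDeriv.fderiv, hJ12, hxs, hns]
    simp only [prod_apply, add_apply, smul_apply, coe_fst', coe_snd', smul_eq_mul, Prod.mk.injEq]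
    constructor <;> field_simp <;> ring
  · rw [hJ11, hJ12, hJ21, hD]
    field_simp
    ring
  · rw [hD]
    refine div_neg_of_neg_of_pos (mul_neg_of_pos_of_neg (mul_pos (by linarith) hNH) hNL) ?_
    have : 0 < V_H - V_L := by linarith
    positivity

theorem stmt_6 (C V_H V_L θ R0 : ℝ)
    (hCH : C > V_H) (hHL : V_H > V_L) (hL : V_L > 0) (hθ : θ > 0) (hR0 : R0 > 1)
    (V : ℝ → ℝ) (hV : ∀ n, V n = n * V_H + (1 - n) * V_L)
    (f : ℝ → ℝ)
    (hf1 : ∀ x : ℝ, x < 1 - 1 / R0 → f x = 1 - 1 / (R0 * (1 - x)))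
    (hf2 : ∀ x : ℝ, x ≥ 1 - 1 / R0 → f x = 0)
    (G : ℝ × ℝ → ℝ × ℝ)
    (hG : ∀ p : ℝ × ℝ, G p = (p.1 * (1 - p.1) * (f p.1 * C - V p.2),
        p.2 * (1 - p.2) * (-p.1 + (1 + θ) * (1 - p.1))))
    (hRlo : (2 + θ) * C / (C - V_L) < R0) (hRhi : R0 < (2 + θ) * C / (C - V_H))
    (xs ns J11 J12 J21 D : ℝ)
    (hxs : xs = (1 + θ) / (2 + θ))
    (hns : ns = -(C * (2 + θ - R0) + R0 * V_L) / (R0 * (V_H - V_L)))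
    (hJ11 : J11 = -(1 + θ) * C / R0)
    (hJ12 : J12 = -(1 + θ) * (V_H - V_L) / (2 + θ) ^ 2)
    (hJ21 : J21 = (2 + θ) * (C * (2 + θ - R0) + R0 * V_H) * (C * (2 + θ - R0) + R0 * V_L) /
        (R0 ^ 2 * (V_H - V_L) ^ 2))
    (hD : D = (1 + θ) * (C * (2 + θ - R0) + R0 * V_H) * (C * (2 + θ - R0) + R0 * V_L) /
        ((2 + θ) * R0 ^ 2 * (V_H - V_L))) :
    DifferentiableAt ℝ G (xs, ns) ∧
    fderiv ℝ G (xs, ns) (1, 0) = (J11, J21) ∧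
    fderiv ℝ G (xs, ns) (0, 1) = (J12, 0) ∧
    J11 * 0 - J12 * J21 = D ∧
    D < 0 :=
  stmt_6_general C V_H V_L θ R0 hCH hHL hL hθ V hV f hf1 G hG hRlo hRhi xs ns J11 J12 J21 D hxs hns
    hJ11 hJ12 hJ21 hD
end

section
/- Suppose (2 + θ)·C/(C - V_L) < R0 < (2 + θ)·C/(C - V_H), and set D := (1 + θ)(C(2 + θ - R0) + R0·V_H)(C(2 + θ - R0) + R0·V_L)/((2 + θ)·R0²·(V_H - V_L)) and T := -(1 + θ)·C/R0 (the determinant and trace of the Jacobian of the co-evolutionary vector field at the interior equilibrium). Then the characteristic polynomial λ² - T·λ + D has two real roots λ1 > 0 > λ2, and λ1 + λ2 = T < 0, so the negative eigenvalue has larger absolute value than the positive one. -/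
theorem stmt_7 (C V_H V_L θ R0 : ℝ)
    (hCH : C > V_H) (hHL : V_H > V_L) (hL : V_L > 0) (hθ : θ > 0) (hR0 : R0 > 1)
    (hRlo : (2 + θ) * C / (C - V_L) < R0) (hRhi : R0 < (2 + θ) * C / (C - V_H))
    (D T : ℝ)
    (hD : D = (1 + θ) * (C * (2 + θ - R0) + R0 * V_H) * (C * (2 + θ - R0) + R0 * V_L) /
        ((2 + θ) * R0 ^ 2 * (V_H - V_L)))
    (hT : T = -(1 + θ) * C / R0) :
    ∃ lam1 lam2 : ℝ, lam1 > 0 ∧ 0 > lam2 ∧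
      (∀ lam : ℝ, lam ^ 2 - T * lam + D = (lam - lam1) * (lam - lam2)) ∧
      lam1 + lam2 = T ∧ T < 0 ∧ |lam2| > |lam1| := by
  have hR0pos : (0:ℝ) < R0 := by linarith
  have hCpos : (0:ℝ) < C := by linarith
  have hCH' : 0 < C - V_H := by linarith
  have hCL' : 0 < C - V_L := by linarith
  have hθ2 : (0:ℝ) < 2 + θ := by linarith
  -- factor signs
  have hfH : 0 < C * (2 + θ - R0) + R0 * V_H := by
    have h2 : R0 * (C - V_H) < (2 + θ) * C := (lt_div_iff₀ hCH').mp hRhi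
    nlinarith
  have hfL : C * (2 + θ - R0) + R0 * V_L < 0 := by
    have h2 : (2 + θ) * C < R0 * (C - V_L) := (div_lt_iff₀ hCL').mp hRlo
    nlinarith
  have hDneg : D < 0 := by
    rw [hD]
    apply div_neg_of_neg_of_pos
    · exact mul_neg_of_pos_of_neg (mul_pos (by linarith) hfH) hfL
    · exact mul_pos (mul_pos hθ2 (pow_pos hR0pos 2)) (sub_pos.mpr hHL)
  have hTneg : T < 0 := by
    rw [hT]
    apply div_neg_of_neg_of_pos
    · nlinarith
    · exact hR0pos
  have hdisc : 0 < T ^ 2 - 4 * D := by nlinarith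
  set s := Real.sqrt (T ^ 2 - 4 * D) with hs
  have hspos : 0 < s := Real.sqrt_pos.mpr hdisc
  have hs2 : s ^ 2 = T ^ 2 - 4 * D := Real.sq_sqrt hdisc.le
  refine ⟨(T + s) / 2, (T - s) / 2, ?_, ?_, ?_, ?_, hTneg, ?_⟩
  · have : -T < s := by nlinarith
    linarith
  · linarith
  · intro lam; ring_nf; nlinarith [hs2]
  · ring
  · rw [abs_of_neg (by linarith : (T - s) / 2 < 0),
      abs_of_pos (by nlinarith : (0:ℝ) < (T + s) / 2)]
    linarith
end

section
/- G is differentiable at (0, 1) and its Jacobian matrix there is the diagonal matrix with entries C·(1 - 1/R0) - V_H and -(1 + θ). Both diagonal entries (hence both eigenvalues) are negative if and only if R0 < C/(C - V_H). -/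
/-! At `(0, 1)` both components of `G` are products with a factor vanishing there
(`x` in the first, `1 - n` in the second), so by the product rule the Jacobian is diagonal and
each diagonal entry is the value of the remaining factor times the derivative of the vanishing
one. Only differentiability of `f` near `0` is needed, where `f` is given by a rational
expression because `0 < 1 - 1 / R0`. -/

open Filter Topology

section ProductRule

variable {𝕜 E 𝔸 : Type*} [NontriviallyNormedField 𝕜] [NormedAddCommGroup E] [NormedSpace 𝕜 E]
  [NormedCommRing 𝔸] [NormedAlgebra 𝕜 𝔸] {u w : E → 𝔸} {u' : E →L[𝕜] 𝔸} {p : E}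

theorem HasFDerivAt.mul_of_left_eq_zero (hu : HasFDerivAt u u' p) (hu0 : u p = 0)
    (hw : DifferentiableAt 𝕜 w p) : HasFDerivAt (fun q => u q * w q) (w p • u') p := by
  convert hu.mul hw.hasFDerivAt using 1
  · rfl
  · ext; simp [hu0]

theorem HasFDerivAt.mul_of_right_eq_zero (hw : DifferentiableAt 𝕜 w p) (hu : HasFDerivAt u u' p)
    (hu0 : u p = 0) : HasFDerivAt (fun q => w q * u q) (w p • u') p := by
  simpa only [mul_comm (w _)] using hu.mul_of_left_eq_zero hu0 hw

end ProductRule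

theorem differentiableAt_of_eq_one_sub_one_div {f : ℝ → ℝ} {R0 x₀ : ℝ} (hR0 : 0 < R0)
    (hf : ∀ x : ℝ, x < 1 - 1 / R0 → f x = 1 - 1 / (R0 * (1 - x))) (hx₀ : x₀ < 1 - 1 / R0) :
    DifferentiableAt ℝ f x₀ := by
  have hne : R0 * (1 - x₀) ≠ 0 := by
    have : 1 / R0 < 1 - x₀ := by linarith
    exact (mul_pos hR0 ((one_div_pos.2 hR0).trans this)).ne'
  have hloc : f =ᶠ[𝓝 x₀] fun x => 1 - 1 / (R0 * (1 - x)) :=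
    eventually_of_mem (Iio_mem_nhds hx₀) hf
  refine hloc.differentiableAt_iff.2 ?_
  fun_prop (disch := exact hne)

theorem mul_one_sub_one_div_sub_neg_iff {a b r : ℝ} (hba : b < a) (hr : 0 < r) :
    a * (1 - 1 / r) - b < 0 ↔ r < a / (a - b) := by
  rw [lt_div_iff₀ (sub_pos.2 hba), mul_one_sub, mul_one_div, sub_neg, sub_lt_comm,
    lt_div_iff₀ hr, mul_comm]

theorem stmt_8_general (C V_H V_L θ R0 : ℝ)
    (hCH : C > V_H) (hθ : θ > 0) (hR0 : R0 > 1)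
    (V : ℝ → ℝ) (hV : ∀ n, V n = n * V_H + (1 - n) * V_L)
    (f : ℝ → ℝ)
    (hf1 : ∀ x : ℝ, x < 1 - 1 / R0 → f x = 1 - 1 / (R0 * (1 - x)))
    (G : ℝ × ℝ → ℝ × ℝ)
    (hG : ∀ p : ℝ × ℝ, G p = (p.1 * (1 - p.1) * (f p.1 * C - V p.2),
        p.2 * (1 - p.2) * (-p.1 + (1 + θ) * (1 - p.1)))) :
    DifferentiableAt ℝ G (0, 1) ∧
    fderiv ℝ G (0, 1) (1, 0) = (C * (1 - 1 / R0) - V_H, 0) ∧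
    fderiv ℝ G (0, 1) (0, 1) = (0, -(1 + θ)) ∧
    (C * (1 - 1 / R0) - V_H < 0 ∧ -(1 + θ) < 0 ↔ R0 < C / (C - V_H)) := by
  have hR0pos : 0 < R0 := one_pos.trans hR0
  have h0 : (0 : ℝ) < 1 - 1 / R0 := by rw [sub_pos, div_lt_one hR0pos]; exact hR0
  have hf0 : f 0 = 1 - 1 / R0 := by simpa using hf1 0 h0
  have hfd : DifferentiableAt ℝ f 0 := differentiableAt_of_eq_one_sub_one_div hR0pos hf1 h0
  have hVd : Differentiable ℝ V := by rw [funext hV]; fun_prop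
  have hx : HasFDerivAt (fun p : ℝ × ℝ => p.1 * (1 - p.1) * (f p.1 * C - V p.2))
      ((C * (1 - 1 / R0) - V_H) • ContinuousLinearMap.fst ℝ ℝ ℝ) (0, 1) := by
    refine HasFDerivAt.congr_fderiv (HasFDerivAt.mul_of_left_eq_zero
      (HasFDerivAt.mul_of_left_eq_zero hasFDerivAt_fst rfl (by fun_prop)) (by simp) (by fun_prop)) ?_
    ext <;> simp [hf0, hV, mul_comm]
  have hn : HasFDerivAt (fun p : ℝ × ℝ => p.2 * (1 - p.2) * (-p.1 + (1 + θ) * (1 - p.1)))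
      (-(1 + θ) • ContinuousLinearMap.snd ℝ ℝ ℝ) (0, 1) := by
    refine HasFDerivAt.congr_fderiv (HasFDerivAt.mul_of_left_eq_zero
      (HasFDerivAt.mul_of_right_eq_zero (by fun_prop) (hasFDerivAt_snd.const_sub 1) (by simp))
      (by simp) (by fun_prop)) ?_
    ext <;> simp
  have hG' := (hx.prodMk hn).congr_of_eventuallyEq (Eventually.of_forall hG)
  refine ⟨hG'.differentiableAt, ?_, ?_, ?_⟩
  · simp [hG'.fderiv]
  · simp [hG'.fderiv]
  · rw [← mul_one_sub_one_div_sub_neg_iff hCH hR0pos]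
    exact and_iff_left (by linarith)

theorem stmt_8 (C V_H V_L θ R0 : ℝ)
    (hCH : C > V_H) (hHL : V_H > V_L) (hL : V_L > 0) (hθ : θ > 0) (hR0 : R0 > 1)
    (V : ℝ → ℝ) (hV : ∀ n, V n = n * V_H + (1 - n) * V_L)
    (f : ℝ → ℝ)
    (hf1 : ∀ x : ℝ, x < 1 - 1 / R0 → f x = 1 - 1 / (R0 * (1 - x)))
    (hf2 : ∀ x : ℝ, x ≥ 1 - 1 / R0 → f x = 0)
    (G : ℝ × ℝ → ℝ × ℝ)
    (hG : ∀ p : ℝ × ℝ, G p = (p.1 * (1 - p.1) * (f p.1 * C - V p.2),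
        p.2 * (1 - p.2) * (-p.1 + (1 + θ) * (1 - p.1)))) :
    DifferentiableAt ℝ G (0, 1) ∧
    fderiv ℝ G (0, 1) (1, 0) = (C * (1 - 1 / R0) - V_H, 0) ∧
    fderiv ℝ G (0, 1) (0, 1) = (0, -(1 + θ)) ∧
    (C * (1 - 1 / R0) - V_H < 0 ∧ -(1 + θ) < 0 ↔ R0 < C / (C - V_H)) :=
  stmt_8_general C V_H V_L θ R0 hCH hθ hR0 V hV f hf1 G hG
end

section
/- Assume θ·(C - V_H) > 2·V_H - V_L - C and (2 + θ)·C/(C - V_L) < R0 < (2 + θ)·C/(C - V_H). Then the set of equilibria of the co-evolutionary vector field in the square [0, 1]², i.e. {(x, n) ∈ [0,1]² : G(x, n) = (0, 0)}, consists of exactly the seven points (0,0), (0,1), (1,0), (1,1), (1 - C/(R0(C - V_L)), 0), (1 - C/(R0(C - V_H)), 1), and ((1 + θ)/(2 + θ), -(C(2 + θ - R0) + R0·V_L)/(R0·(V_H - V_L))). -/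
/-!
Every equilibrium lies on one of the three zero sets of the second component: the edges `n = 0`,
`n = 1`, or the vertical line `x = (1 + θ)/(2 + θ)`. On an edge the first component vanishes at
`x = 0`, `x = 1`, or where `f x · C` equals the vaccination cost `V_L` resp. `V_H`; inverting the
hyperbolic branch of `f` gives `x = 1 - C/(R0 (C - v))` for a cost `0 < v < C`. On the vertical
line, `f x · C = V n` is linear in `n` and its solution is the mixed equilibrium. The bounds on
`R0` put all these points in the unit square.
-/

open Set unitInterval

lemma mul_one_sub_mul_eq_zero_iff {R : Type*} [Ring R] [NoZeroDivisors R] {a b : R} :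
    a * (1 - a) * b = 0 ↔ a = 0 ∨ a = 1 ∨ b = 0 := by
  simp only [mul_eq_zero, sub_eq_zero, eq_comm (a := (1 : R)), or_assoc]

lemma neg_add_mul_one_sub_eq_zero_iff {K : Type*} [Field K] {θ x : K} (hθ : 2 + θ ≠ 0) :
    -x + (1 + θ) * (1 - x) = 0 ↔ x = (1 + θ) / (2 + θ) := by
  rw [eq_div_iff hθ]
  constructor <;> intro h <;> linear_combination -h

lemma infection_mul_eq_iff {C R0 v x : ℝ} {f : ℝ → ℝ} (hR0 : 0 < R0)
    (hf1 : ∀ x : ℝ, x < 1 - 1 / R0 → f x = 1 - 1 / (R0 * (1 - x)))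
    (hf2 : ∀ x : ℝ, x ≥ 1 - 1 / R0 → f x = 0) (hv : 0 < v) (hvC : v < C) :
    f x * C = v ↔ x = 1 - C / (R0 * (C - v)) := by
  have hCv : 0 < R0 * (C - v) := mul_pos hR0 (by linarith)
  constructor
  · intro heq
    by_cases hx : x < 1 - 1 / R0
    · have : 0 < 1 - x := lt_trans (by positivity : 0 < 1 / R0) (by linarith)
      rw [hf1 x hx] at heq
      field_simp at heq
      rw [eq_sub_iff_add_eq, ← eq_sub_iff_add_eq', div_eq_iff hCv.ne']
      linear_combination -heq
    · rw [hf2 x (not_lt.mp hx)] at heq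
      linarith
  · rintro rfl
    have hlt : 1 / R0 < C / (R0 * (C - v)) := by
      rw [div_lt_div_iff₀ hR0 hCv]
      nlinarith
    rw [hf1 _ (by linarith), sub_sub_cancel]
    have : C - v ≠ 0 := by linarith
    have : C ≠ 0 := by linarith
    field_simp
    ring

lemma infection_mul_eq_cost_iff {C V_H V_L θ R0 n : ℝ} {f : ℝ → ℝ} (hR0 : 0 < R0)
    (hf1 : ∀ x : ℝ, x < 1 - 1 / R0 → f x = 1 - 1 / (R0 * (1 - x)))
    (hf2 : ∀ x : ℝ, x ≥ 1 - 1 / R0 → f x = 0)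
    (hCH : C > V_H) (hHL : V_H > V_L) (hL : V_L > 0) (hθ : 0 < 2 + θ) (hn : n ∈ I) :
    f ((1 + θ) / (2 + θ)) * C = n * V_H + (1 - n) * V_L ↔
      n = -(C * (2 + θ - R0) + R0 * V_L) / (R0 * (V_H - V_L)) := by
  have hcost : V_L ≤ n * V_H + (1 - n) * V_L ∧ n * V_H + (1 - n) * V_L ≤ V_H := by
    constructor <;> nlinarith [hn.1, hn.2]
  rw [infection_mul_eq_iff hR0 hf1 hf2 (by linarith) (by linarith),
    eq_div_iff (mul_pos hR0 (by linarith)).ne',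
    show (1 + θ) / (2 + θ) = 1 - 1 / (2 + θ) by field_simp; ring, sub_right_inj,
    div_eq_div_iff hθ.ne' (mul_pos hR0 (by linarith)).ne']
  constructor <;> intro h <;> linear_combination -h

lemma one_sub_div_mem_unitInterval {a b : ℝ} (ha : 0 ≤ a) (hab : a ≤ b) : 1 - a / b ∈ I :=
  Icc.mem_iff_one_sub_mem.mp (div_mem ha (ha.trans hab) hab)

theorem stmt_11_general (C V_H V_L θ R0 : ℝ)
    (hCH : C > V_H) (hHL : V_H > V_L) (hL : V_L > 0) (hθ : θ > 0)
    (V : ℝ → ℝ) (hV : ∀ n, V n = n * V_H + (1 - n) * V_L)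
    (f : ℝ → ℝ)
    (hf1 : ∀ x : ℝ, x < 1 - 1 / R0 → f x = 1 - 1 / (R0 * (1 - x)))
    (hf2 : ∀ x : ℝ, x ≥ 1 - 1 / R0 → f x = 0)
    (G : ℝ × ℝ → ℝ × ℝ)
    (hG : ∀ p : ℝ × ℝ, G p = (p.1 * (1 - p.1) * (f p.1 * C - V p.2),
        p.2 * (1 - p.2) * (-p.1 + (1 + θ) * (1 - p.1))))
    (hcase : θ * (C - V_H) > 2 * V_H - V_L - C)
    (hRlo : (2 + θ) * C / (C - V_L) < R0) (hRhi : R0 < (2 + θ) * C / (C - V_H)) :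
    {p : ℝ × ℝ | 0 ≤ p.1 ∧ p.1 ≤ 1 ∧ 0 ≤ p.2 ∧ p.2 ≤ 1 ∧ G p = (0, 0)} =
      ({((0 : ℝ), (0 : ℝ)), (0, 1), (1, 0), (1, 1),
        (1 - C / (R0 * (C - V_L)), 0), (1 - C / (R0 * (C - V_H)), 1),
        ((1 + θ) / (2 + θ), -(C * (2 + θ - R0) + R0 * V_L) / (R0 * (V_H - V_L)))} :
        Set (ℝ × ℝ)) := by
  have hθ2 : 0 < 2 + θ := by linarith
  have hRlo' : (2 + θ) * C < R0 * (C - V_L) := (div_lt_iff₀ (by linarith)).mp hRlo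
  have hRhi' : R0 * (C - V_H) < (2 + θ) * C := (lt_div_iff₀ (by linarith)).mp hRhi
  have hR0 : 0 < R0 := (div_pos (mul_pos hθ2 (by linarith)) (by linarith)).trans hRlo
  have hxL : ∀ x, f x * C = V_L ↔ x = 1 - C / (R0 * (C - V_L)) := fun _ ↦
    infection_mul_eq_iff hR0 hf1 hf2 hL (by linarith)
  have hxH : ∀ x, f x * C = V_H ↔ x = 1 - C / (R0 * (C - V_H)) := fun _ ↦
    infection_mul_eq_iff hR0 hf1 hf2 (by linarith) hCH
  have hmix : ∀ n ∈ I, f ((1 + θ) / (2 + θ)) * C = n * V_H + (1 - n) * V_L ↔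
      n = -(C * (2 + θ - R0) + R0 * V_L) / (R0 * (V_H - V_L)) := fun _ ↦
    infection_mul_eq_cost_iff hR0 hf1 hf2 hCH hHL hL hθ2
  have hx_mix : 0 < (1 + θ) / (2 + θ) ∧ (1 + θ) / (2 + θ) < 1 :=
    ⟨by positivity, (div_lt_one hθ2).mpr (by linarith)⟩
  have hn_mix : -(C * (2 + θ - R0) + R0 * V_L) / (R0 * (V_H - V_L)) ∈ I :=
    div_mem (by linarith) (by nlinarith) (by linarith)
  have hL_mem : 1 - C / (R0 * (C - V_L)) ∈ I :=
    one_sub_div_mem_unitInterval (by linarith) (by nlinarith)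
  -- `hcase` says `(2 + θ) (C - V_H) > C - V_L`, which with `hRlo` gives `R0 (C - V_H) > C`.
  have hH_mem : 1 - C / (R0 * (C - V_H)) ∈ I :=
    one_sub_div_mem_unitInterval (by linarith) (by nlinarith)
  ext ⟨x, n⟩
  simp only [mem_ofPred_eq, mem_insert_iff, mem_singleton_iff, hG, hV, Prod.mk.injEq,
    mul_one_sub_mul_eq_zero_iff, sub_eq_zero, neg_add_mul_one_sub_eq_zero_iff hθ2.ne']
  constructor
  · rintro ⟨hx0, hx1, hn0, hn1, hx | hx | hx, rfl | rfl | rfl⟩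
    · simp [hx]
    · simp [hx]
    · exact absurd hx hx_mix.1.ne'
    · simp [hx]
    · simp [hx]
    · exact absurd hx hx_mix.2.ne
    · simp [(hxL x).mp (by linarith)]
    · simp [(hxH x).mp (by linarith)]
    · simp [(hmix n ⟨hn0, hn1⟩).mp hx]
  · rintro (⟨rfl, rfl⟩ | ⟨rfl, rfl⟩ | ⟨rfl, rfl⟩ | ⟨rfl, rfl⟩ | ⟨rfl, rfl⟩ | ⟨rfl, rfl⟩ |
      ⟨rfl, rfl⟩)
    iterate 4 norm_num
    · refine ⟨hL_mem.1, hL_mem.2, le_rfl, zero_le_one, Or.inr (Or.inr ?_),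
        Or.inl rfl⟩
      rw [(hxL _).mpr rfl]
      ring
    · refine ⟨hH_mem.1, hH_mem.2, zero_le_one, le_rfl, Or.inr (Or.inr ?_),
        Or.inr (Or.inl rfl)⟩
      rw [(hxH _).mpr rfl]
      ring
    · exact ⟨hx_mix.1.le, hx_mix.2.le, hn_mix.1, hn_mix.2,
        Or.inr (Or.inr ((hmix _ hn_mix).mpr rfl)), Or.inr (Or.inr rfl)⟩

theorem stmt_11 (C V_H V_L θ R0 : ℝ)
    (hCH : C > V_H) (hHL : V_H > V_L) (hL : V_L > 0) (hθ : θ > 0) (hR0 : R0 > 1)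
    (V : ℝ → ℝ) (hV : ∀ n, V n = n * V_H + (1 - n) * V_L)
    (f : ℝ → ℝ)
    (hf1 : ∀ x : ℝ, x < 1 - 1 / R0 → f x = 1 - 1 / (R0 * (1 - x)))
    (hf2 : ∀ x : ℝ, x ≥ 1 - 1 / R0 → f x = 0)
    (G : ℝ × ℝ → ℝ × ℝ)
    (hG : ∀ p : ℝ × ℝ, G p = (p.1 * (1 - p.1) * (f p.1 * C - V p.2),
        p.2 * (1 - p.2) * (-p.1 + (1 + θ) * (1 - p.1))))
    (hcase : θ * (C - V_H) > 2 * V_H - V_L - C)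
    (hRlo : (2 + θ) * C / (C - V_L) < R0) (hRhi : R0 < (2 + θ) * C / (C - V_H)) :
    {p : ℝ × ℝ | 0 ≤ p.1 ∧ p.1 ≤ 1 ∧ 0 ≤ p.2 ∧ p.2 ≤ 1 ∧ G p = (0, 0)} =
      ({((0 : ℝ), (0 : ℝ)), (0, 1), (1, 0), (1, 1),
        (1 - C / (R0 * (C - V_L)), 0), (1 - C / (R0 * (C - V_H)), 1),
        ((1 + θ) / (2 + θ), -(C * (2 + θ - R0) + R0 * V_L) / (R0 * (V_H - V_L)))} :
        Set (ℝ × ℝ)) :=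
  stmt_11_general C V_H V_L θ R0 hCH hHL hL hθ V hV f hf1 hf2 G hG hcase hRlo hRhi
end

section
/- Assume 1 < R0 < C/(C - V_L). Then the set of equilibria of the co-evolutionary vector field in the square [0, 1]², i.e. {(x, n) ∈ [0,1]² : G(x, n) = (0, 0)}, consists of exactly the four corner points (0,0), (0,1), (1,0) and (1,1). -/
theorem stmt_12 (C V_H V_L θ R0 : ℝ)
    (hCH : C > V_H) (hHL : V_H > V_L) (hL : V_L > 0) (hθ : θ > 0) (hR0 : R0 > 1)
    (V : ℝ → ℝ) (hV : ∀ n, V n = n * V_H + (1 - n) * V_L)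
    (f : ℝ → ℝ)
    (hf1 : ∀ x : ℝ, x < 1 - 1 / R0 → f x = 1 - 1 / (R0 * (1 - x)))
    (hf2 : ∀ x : ℝ, x ≥ 1 - 1 / R0 → f x = 0)
    (G : ℝ × ℝ → ℝ × ℝ)
    (hG : ∀ p : ℝ × ℝ, G p = (p.1 * (1 - p.1) * (f p.1 * C - V p.2),
        p.2 * (1 - p.2) * (-p.1 + (1 + θ) * (1 - p.1))))
    (hRhi : R0 < C / (C - V_L)) :
    {p : ℝ × ℝ | 0 ≤ p.1 ∧ p.1 ≤ 1 ∧ 0 ≤ p.2 ∧ p.2 ≤ 1 ∧ G p = (0, 0)} =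
      ({((0 : ℝ), (0 : ℝ)), (0, 1), (1, 0), (1, 1)} : Set (ℝ × ℝ)) := by
  have hC : (0:ℝ) < C := by linarith
  have hCL : (0:ℝ) < C - V_L := by linarith
  have hR0pos : (0:ℝ) < R0 := by linarith
  have hmul : R0 * (C - V_L) < C := (lt_div_iff₀ hCL).mp hRhi
  have key : ∀ x : ℝ, 0 ≤ x → x ≤ 1 → f x * C < V_L := by
    intro x hx0 hx1
    rcases lt_or_ge x (1 - 1/R0) with h | h
    · have hRinv : (0:ℝ) < 1/R0 := by positivity
      have h1x : 1/R0 < 1 - x := by linarith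
      have h1xp : (0:ℝ) < 1 - x := by linarith
      have hden : (0:ℝ) < R0 * (1 - x) := by positivity
      have hle : 1/R0 ≤ 1/(R0 * (1 - x)) := by
        apply one_div_le_one_div_of_le hden
        nlinarith
      have hfx : f x ≤ 1 - 1/R0 := by rw [hf1 x h]; linarith
      have hinv : R0 * (1/R0) = 1 := by field_simp
      have h2 : (1 - 1/R0) * C < V_L := by nlinarith
      calc f x * C ≤ (1 - 1/R0) * C := by nlinarith
        _ < V_L := h2
    · rw [hf2 x h]; simpa using hL
  ext ⟨x, n⟩
  simp only [Set.mem_setOf_eq, Set.mem_insert_iff, Set.mem_singleton_iff, hG,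
    Prod.mk.injEq]
  constructor
  · rintro ⟨hx0, hx1, hn0, hn1, h1, h2⟩
    have hVn : V_L ≤ V n := by rw [hV]; nlinarith
    have hk := key x hx0 hx1
    have hx01 : x = 0 ∨ x = 1 := by
      rcases mul_eq_zero.mp h1 with h | h
      · rcases mul_eq_zero.mp h with h | h
        · exact Or.inl h
        · exact Or.inr (by linarith)
      · exfalso; linarith
    have hn01 : n = 0 ∨ n = 1 := by
      rcases mul_eq_zero.mp h2 with h | h
      · rcases mul_eq_zero.mp h with h | h
        · exact Or.inl h
        · exact Or.inr (by linarith)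
      · exfalso
        rcases hx01 with rfl | rfl <;> nlinarith
    rcases hx01 with rfl | rfl <;> rcases hn01 with rfl | rfl <;> simp
  · rintro (⟨rfl, rfl⟩ | ⟨rfl, rfl⟩ | ⟨rfl, rfl⟩ | ⟨rfl, rfl⟩) <;>
      norm_num
end

section
/- Assume θ·(C - V_H) > 2·V_H - V_L - C and C/(C - V_H) < R0 < (2 + θ)·C/(C - V_L). Then the set of equilibria of the co-evolutionary vector field in the square [0, 1]², i.e. {(x, n) ∈ [0,1]² : G(x, n) = (0, 0)}, consists of exactly the six points (0,0), (0,1), (1,0), (1,1), (1 - C/(R0(C - V_L)), 0) and (1 - C/(R0(C - V_H)), 1); in particular there is no equilibrium in the open square (0,1)². -/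
set_option maxHeartbeats 1000000


theorem stmt_13 (C V_H V_L θ R0 : ℝ)
    (hCH : C > V_H) (hHL : V_H > V_L) (hL : V_L > 0) (hθ : θ > 0) (hR0 : R0 > 1)
    (V : ℝ → ℝ) (hV : ∀ n, V n = n * V_H + (1 - n) * V_L)
    (f : ℝ → ℝ)
    (hf1 : ∀ x : ℝ, x < 1 - 1 / R0 → f x = 1 - 1 / (R0 * (1 - x)))
    (hf2 : ∀ x : ℝ, x ≥ 1 - 1 / R0 → f x = 0)
    (G : ℝ × ℝ → ℝ × ℝ)
    (hG : ∀ p : ℝ × ℝ, G p = (p.1 * (1 - p.1) * (f p.1 * C - V p.2),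
        p.2 * (1 - p.2) * (-p.1 + (1 + θ) * (1 - p.1))))
    (hcase : θ * (C - V_H) > 2 * V_H - V_L - C)
    (hRlo : C / (C - V_H) < R0) (hRhi : R0 < (2 + θ) * C / (C - V_L)) :
    ({p : ℝ × ℝ | 0 ≤ p.1 ∧ p.1 ≤ 1 ∧ 0 ≤ p.2 ∧ p.2 ≤ 1 ∧ G p = (0, 0)} =
      ({((0 : ℝ), (0 : ℝ)), (0, 1), (1, 0), (1, 1),
        (1 - C / (R0 * (C - V_L)), 0), (1 - C / (R0 * (C - V_H)), 1)} : Set (ℝ × ℝ))) ∧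
    (∀ p : ℝ × ℝ, p.1 ∈ Set.Ioo (0 : ℝ) 1 → p.2 ∈ Set.Ioo (0 : ℝ) 1 → G p ≠ (0, 0)) := by
  have hC : (0:ℝ) < C := by linarith
  have hCL : (0:ℝ) < C - V_L := by linarith
  have hCHp : (0:ℝ) < C - V_H := by linarith
  have hR0' : (0:ℝ) < R0 := by linarith
  have hRL : C < R0 * (C - V_L) := by
    have h1 : C / (C - V_L) < C / (C - V_H) :=
      div_lt_div_of_pos_left hC hCHp (by linarith)
    exact (div_lt_iff₀ hCL).mp (h1.trans hRlo)
  have hRH : C < R0 * (C - V_H) := (div_lt_iff₀ hCHp).mp hRlo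
  have hRhi' : R0 * (C - V_L) < (2 + θ) * C := (lt_div_iff₀ hCL).mp hRhi
  have h2θ : (0:ℝ) < 2 + θ := by linarith
  have hVL : ∀ n : ℝ, 0 ≤ n → V_L ≤ V n := by
    intro n hn; rw [hV]; nlinarith
  -- key interior lemma
  have hkey : ∀ x n : ℝ, 0 ≤ n → (-x + (1 + θ) * (1 - x) = 0) → f x * C - V n ≠ 0 := by
    intro x n hn hx heq
    have h1x : 1 - x = 1 / (2 + θ) := by
      field_simp
      nlinarith [hx]
    have hVn := hVL n hn
    by_cases hc : x < 1 - 1 / R0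
    · rw [hf1 x hc] at heq
      have hrw : R0 * (1 - x) = R0 / (2 + θ) := by rw [h1x]; ring
      rw [hrw, one_div_div] at heq
      have h4 : C - V_L < (2 + θ) * C / R0 := (lt_div_iff₀ hR0').mpr (by nlinarith)
      have h5 : (1 - (2 + θ) / R0) * C = C - (2 + θ) * C / R0 := by ring
      linarith [heq, h5]
    · rw [hf2 x (le_of_not_gt hc)] at heq
      have : V n = 0 := by linarith [heq]
      linarith
  -- the two nontrivial equilibria
  set xL : ℝ := 1 - C / (R0 * (C - V_L)) with hxLdef
  set xH : ℝ := 1 - C / (R0 * (C - V_H)) with hxHdef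
  have hposL : (0:ℝ) < R0 * (C - V_L) := by positivity
  have hposH : (0:ℝ) < R0 * (C - V_H) := by positivity
  have hxL0 : 0 < xL := by
    have : C / (R0 * (C - V_L)) < 1 := (div_lt_one hposL).mpr hRL
    simp only [hxLdef]; linarith
  have hxH0 : 0 < xH := by
    have : C / (R0 * (C - V_H)) < 1 := (div_lt_one hposH).mpr hRH
    simp only [hxHdef]; linarith
  have hxL1 : xL ≤ 1 := by
    have : 0 ≤ C / (R0 * (C - V_L)) := by positivity
    simp only [hxLdef]; linarith
  have hxH1 : xH ≤ 1 := by
    have : 0 ≤ C / (R0 * (C - V_H)) := by positivity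
    simp only [hxHdef]; linarith
  have hxLlt : xL < 1 - 1 / R0 := by
    have : 1 / R0 < C / (R0 * (C - V_L)) := by
      rw [div_lt_div_iff₀ hR0' hposL]
      nlinarith
    simp only [hxLdef]; linarith
  have hxHlt : xH < 1 - 1 / R0 := by
    have : 1 / R0 < C / (R0 * (C - V_H)) := by
      rw [div_lt_div_iff₀ hR0' hposH]
      nlinarith
    simp only [hxHdef]; linarith
  have hfxL : f xL * C - V_L = 0 := by
    rw [hf1 xL hxLlt]
    have h1 : 1 - xL = C / (R0 * (C - V_L)) := by simp [hxLdef]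
    rw [h1]
    have hCne : C ≠ 0 := ne_of_gt hC
    have hne : R0 * (C - V_L) ≠ 0 := ne_of_gt hposL
    field_simp
    ring
  have hfxH : f xH * C - V_H = 0 := by
    rw [hf1 xH hxHlt]
    have h1 : 1 - xH = C / (R0 * (C - V_H)) := by simp [hxHdef]
    rw [h1]
    have hCne : C ≠ 0 := ne_of_gt hC
    have hne : R0 * (C - V_H) ≠ 0 := ne_of_gt hposH
    field_simp
    ring
  have hsolve : ∀ x W : ℝ, 0 < C - W → x < 1 - 1 / R0 → f x * C - W = 0 →
      x = 1 - C / (R0 * (C - W)) := by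
    intro x W hW hxlt h
    rw [hf1 x hxlt] at h
    have h1xp : (0:ℝ) < 1 - x := by
      have : (0:ℝ) < 1 / R0 := by positivity
      linarith
    have hne : R0 * (1 - x) ≠ 0 := by positivity
    have h' : R0 * (1 - x) * (C - W) = C := by
      field_simp at h
      linarith
    have h2 : 1 - x = C / (R0 * (C - W)) := by
      rw [eq_div_iff (ne_of_gt (mul_pos hR0' hW))]
      linear_combination h'
    linarith
  have hV0 : V 0 = V_L := by rw [hV]; ring
  have hV1 : V 1 = V_H := by rw [hV]; ring
  constructor
  · ext p
    obtain ⟨x, n⟩ := p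
    simp only [Set.mem_setOf_eq, Set.mem_insert_iff, Set.mem_singleton_iff, hG,
      Prod.mk.injEq]
    constructor
    · rintro ⟨hx0, hx1, hn0, hn1, h1, h2⟩
      rcases mul_eq_zero.mp h2 with h2' | h2'
      · rcases mul_eq_zero.mp h2' with hn | hn
        · -- n = 0
          subst hn
          rw [hV0] at h1
          rcases mul_eq_zero.mp h1 with h | h
          · rcases mul_eq_zero.mp h with h | h
            · exact Or.inl ⟨h, rfl⟩
            · exact Or.inr (Or.inr (Or.inl ⟨by linarith, rfl⟩))
          · -- f x * C - V_L = 0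
            refine Or.inr (Or.inr (Or.inr (Or.inr (Or.inl ⟨?_, rfl⟩))))
            have hxlt : x < 1 - 1 / R0 := by
              by_contra hcge
              rw [hf2 x (le_of_not_gt hcge)] at h
              simp at h; linarith
            exact hsolve x V_L hCL hxlt h
        · -- n = 1
          have hn' : n = 1 := by linarith
          subst hn'
          rw [hV1] at h1
          rcases mul_eq_zero.mp h1 with h | h
          · rcases mul_eq_zero.mp h with h | h
            · exact Or.inr (Or.inl ⟨h, rfl⟩)
            · exact Or.inr (Or.inr (Or.inr (Or.inl ⟨by linarith, rfl⟩)))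
          · refine Or.inr (Or.inr (Or.inr (Or.inr (Or.inr ⟨?_, rfl⟩))))
            have hxlt : x < 1 - 1 / R0 := by
              by_contra hcge
              rw [hf2 x (le_of_not_gt hcge)] at h
              simp at h; linarith
            exact hsolve x V_H hCHp hxlt h
      · -- -x + (1+θ)(1-x) = 0
        exfalso
        have hxe : x = (1 + θ) / (2 + θ) := by
          rw [eq_div_iff (ne_of_gt h2θ)]
          linear_combination -h2'
        have hx0' : x ≠ 0 := by
          rw [hxe]; positivity
        have hx1' : x ≠ 1 := by
          rw [hxe]; intro hc
          rw [div_eq_one_iff_eq (ne_of_gt h2θ)] at hc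
          linarith
        rcases mul_eq_zero.mp h1 with h | h
        · rcases mul_eq_zero.mp h with h | h
          · exact hx0' h
          · exact hx1' (by linarith)
        · exact hkey x n hn0 h2' h
    · rintro (⟨hx, hn⟩ | ⟨hx, hn⟩ | ⟨hx, hn⟩ | ⟨hx, hn⟩ | ⟨hx, hn⟩ | ⟨hx, hn⟩) <;>
        subst hx <;> subst hn
      · norm_num
      · norm_num
      · norm_num
      · norm_num
      · refine ⟨by linarith, by linarith, le_refl 0, zero_le_one, ?_, by ring⟩
        rw [hV0]
        linear_combination (xL * (1 - xL)) * hfxL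
      · refine ⟨by linarith, by linarith, zero_le_one, le_refl 1, ?_, by ring⟩
        rw [hV1]
        linear_combination (xH * (1 - xH)) * hfxH
  · rintro ⟨x, n⟩ ⟨hx0, hx1⟩ ⟨hn0, hn1⟩ hGp
    rw [hG] at hGp
    simp only [Prod.mk.injEq] at hGp
    obtain ⟨h1, h2⟩ := hGp
    have hx0' : x ≠ 0 := ne_of_gt hx0
    have hx1' : (1 : ℝ) - x ≠ 0 := by simp only [ne_eq, sub_eq_zero]; exact fun h => (ne_of_lt hx1) h.symm
    have hn0' : n ≠ 0 := ne_of_gt hn0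
    have hn1' : (1 : ℝ) - n ≠ 0 := by simp only [ne_eq, sub_eq_zero]; exact fun h => (ne_of_lt hn1) h.symm
    have hfac : -x + (1 + θ) * (1 - x) = 0 := by
      rcases mul_eq_zero.mp h2 with h | h
      · rcases mul_eq_zero.mp h with h | h
        · exact absurd h hn0'
        · exact absurd h hn1'
      · exact h
    have hfac1 : f x * C - V n = 0 := by
      rcases mul_eq_zero.mp h1 with h | h
      · rcases mul_eq_zero.mp h with h | h
        · exact absurd h hx0'
        · exact absurd h hx1'
      · exact h
    exact hkey x n (le_of_lt hn0) hfac hfac1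
end

section
/- Assume θ·(C - V_H) < 2·V_H - V_L - C and (2 + θ)·C/(C - V_L) < R0 < C/(C - V_H) (Case 2 bistability). Then both (1 - C/(R0(C - V_L)), 0) and (0, 1) are equilibria of the co-evolutionary vector field, and the Jacobian matrix of G at each of these two points has both of its eigenvalues strictly negative. -/
/-!
Below the herd-immunity threshold `x < 1 - 1 / R0` the field `G` coincides with a polynomial
field, so it is smooth near both equilibria, which lie below the threshold. On the faces `n = 0`
and `n = 1` the factor `n (1 - n)` kills the `x`-derivative of the `n`-component, so the Jacobian
is upper triangular and its eigenvalues are its diagonal entries. Their signs come down to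
`C < R0 (C - V_L)` and `(2 + θ) C < R0 (C - V_L)` at the first equilibrium, and to
`R0 (C - V_H) < C` and `θ > -1` at `(0, 1)`.
-/

open Filter Topology ContinuousLinearMap

noncomputable section

def vaccCost (V_H V_L n : ℝ) : ℝ := n * V_H + (1 - n) * V_L

def coevField (C θ : ℝ) (V f : ℝ → ℝ) (p : ℝ × ℝ) : ℝ × ℝ :=
  (p.1 * (1 - p.1) * (f p.1 * C - V p.2), p.2 * (1 - p.2) * (-p.1 + (1 + θ) * (1 - p.1)))

def jacobian (F : ℝ × ℝ → ℝ × ℝ) (p : ℝ × ℝ) : Matrix (Fin 2) (Fin 2) ℝ :=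
  !![(fderiv ℝ F p (1, 0)).1, (fderiv ℝ F p (0, 1)).1;
     (fderiv ℝ F p (1, 0)).2, (fderiv ℝ F p (0, 1)).2]

/-- Agrees with `coevField` on `x < 1 - 1 / R0`, where `x * (1 - x) * f x * C`
simplifies to `x * (1 - x) * C - C / R0 * x`. -/
def polyCoevField (C V_H V_L θ R0 : ℝ) (q : ℝ × ℝ) : ℝ × ℝ :=
  (q.1 * (1 - q.1) * (C - vaccCost V_H V_L q.2) - C / R0 * q.1,
   q.2 * (1 - q.2) * (-q.1 + (1 + θ) * (1 - q.1)))

lemma hasFDerivAt_polyCoevField (C V_H V_L θ R0 : ℝ) (p : ℝ × ℝ) :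
    HasFDerivAt (polyCoevField C V_H V_L θ R0)
      ((((1 - 2 * p.1) * (C - vaccCost V_H V_L p.2) - C / R0) • fst ℝ ℝ ℝ
          + (p.1 * (1 - p.1) * (V_L - V_H)) • snd ℝ ℝ ℝ).prod
        ((p.2 * (1 - p.2) * -(2 + θ)) • fst ℝ ℝ ℝ
          + ((1 - 2 * p.2) * (-p.1 + (1 + θ) * (1 - p.1))) • snd ℝ ℝ ℝ)) p := by
  have h1 : HasFDerivAt (fun q : ℝ × ℝ => q.1) (fst ℝ ℝ ℝ) p := hasFDerivAt_fst
  have h2 : HasFDerivAt (fun q : ℝ × ℝ => q.2) (snd ℝ ℝ ℝ) p := hasFDerivAt_snd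
  have hc (c : ℝ) : HasFDerivAt (fun _ : ℝ × ℝ => c) (0 : ℝ × ℝ →L[ℝ] ℝ) p :=
    hasFDerivAt_const c p
  have hx := ((h1.mul ((hc 1).sub h1)).mul
    ((hc C).sub ((h2.mul (hc V_H)).add (((hc 1).sub h2).mul (hc V_L))))).sub
    ((hc (C / R0)).mul h1)
  have hn := (h2.mul ((hc 1).sub h2)).mul (h1.neg.add ((hc (1 + θ)).mul ((hc 1).sub h1)))
  refine (hx.prodMk hn).congr_fderiv (ContinuousLinearMap.ext fun v => ?_)
  simp only [Pi.mul_apply, Pi.sub_apply, Pi.add_apply, Pi.neg_apply, smul_zero, zero_add, zero_sub,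
    smul_neg, neg_add_rev, neg_neg, smul_add, add_zero, ContinuousLinearMap.prod_apply, sub_apply,
    add_apply, smul_apply, neg_apply, coe_fst', coe_snd', smul_eq_mul, vaccCost, Prod.ext_iff]
  constructor <;> ring

lemma coevField_eventuallyEq_polyCoevField {C V_H V_L θ R0 : ℝ} (hR0 : 0 < R0) {f : ℝ → ℝ}
    (hf : ∀ x, x < 1 - 1 / R0 → f x = 1 - 1 / (R0 * (1 - x)))
    {p : ℝ × ℝ} (hp : p.1 < 1 - 1 / R0) :
    coevField C θ (vaccCost V_H V_L) f =ᶠ[𝓝 p] polyCoevField C V_H V_L θ R0 := by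
  filter_upwards [(isOpen_lt continuous_fst continuous_const).mem_nhds hp] with q hq
  have h1q : (1 : ℝ) - q.1 ≠ 0 := by
    have : 0 < 1 / R0 := by positivity
    linarith
  simp only [coevField, polyCoevField, hf q.1 hq, Prod.mk.injEq, and_true]
  field_simp
  ring

lemma jacobian_coevField_of_face {C V_H V_L θ R0 : ℝ} (hR0 : 0 < R0) {f : ℝ → ℝ}
    (hf : ∀ x, x < 1 - 1 / R0 → f x = 1 - 1 / (R0 * (1 - x)))
    {p : ℝ × ℝ} (hp : p.1 < 1 - 1 / R0) (hface : p.2 * (1 - p.2) = 0) :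
    DifferentiableAt ℝ (coevField C θ (vaccCost V_H V_L) f) p ∧
      jacobian (coevField C θ (vaccCost V_H V_L) f) p =
        !![(1 - 2 * p.1) * (C - vaccCost V_H V_L p.2) - C / R0, p.1 * (1 - p.1) * (V_L - V_H);
           0, (1 - 2 * p.2) * (-p.1 + (1 + θ) * (1 - p.1))] := by
  have hG := (hasFDerivAt_polyCoevField C V_H V_L θ R0 p).congr_of_eventuallyEq
    (coevField_eventuallyEq_polyCoevField hR0 hf hp)
  refine ⟨hG.differentiableAt, ?_⟩
  simp [jacobian, hG.fderiv, hface]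

def IsStableNode (F : ℝ × ℝ → ℝ × ℝ) (p : ℝ × ℝ) : Prop :=
  DifferentiableAt ℝ F p ∧ ∃ lam1 lam2 : ℝ, lam1 < 0 ∧ lam2 < 0 ∧
    ∀ t : ℝ, Matrix.det (t • (1 : Matrix (Fin 2) (Fin 2) ℝ) - jacobian F p) =
      (t - lam1) * (t - lam2)

lemma isStableNode_of_jacobian_eq {F : ℝ × ℝ → ℝ × ℝ} {p : ℝ × ℝ}
    (hF : DifferentiableAt ℝ F p) {a b d : ℝ} (hJ : jacobian F p = !![a, b; 0, d])
    (ha : a < 0) (hd : d < 0) :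
    IsStableNode F p :=
  ⟨hF, a, d, ha, hd, fun t => by simp [hJ, Matrix.det_fin_two]⟩

section Equilibria

variable {C V_H V_L θ R0 : ℝ} {f : ℝ → ℝ}

lemma interiorEq_lt_threshold (hR0 : 0 < R0) (hL : 0 < V_L) (hCL : 0 < C - V_L) :
    1 - C / (R0 * (C - V_L)) < 1 - 1 / R0 := by
  rw [sub_lt_sub_iff_left, div_lt_div_iff₀ hR0 (by positivity)]
  nlinarith

lemma coevField_interiorEq (hR0 : 0 < R0) (hL : 0 < V_L) (hCL : 0 < C - V_L)
    (hf : ∀ x, x < 1 - 1 / R0 → f x = 1 - 1 / (R0 * (1 - x))) :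
    coevField C θ (vaccCost V_H V_L) f (1 - C / (R0 * (C - V_L)), 0) = (0, 0) := by
  have hfx : f (1 - C / (R0 * (C - V_L))) * C = V_L := by
    have hC : C ≠ 0 := by linarith
    rw [hf _ (interiorEq_lt_threshold hR0 hL hCL), sub_sub_cancel]
    field_simp
    ring
  simp [coevField, vaccCost, hfx]

lemma isStableNode_interiorEq (hR0 : 0 < R0) (hL : 0 < V_L) (hCL : 0 < C - V_L) (hθ : 0 < θ)
    (hf : ∀ x, x < 1 - 1 / R0 → f x = 1 - 1 / (R0 * (1 - x)))
    (hlo : (2 + θ) * C < R0 * (C - V_L)) :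
    IsStableNode (coevField C θ (vaccCost V_H V_L) f) (1 - C / (R0 * (C - V_L)), 0) := by
  obtain ⟨hdiff, hjac⟩ := jacobian_coevField_of_face (p := (1 - C / (R0 * (C - V_L)), 0))
    hR0 hf (interiorEq_lt_threshold hR0 hL hCL) (by simp)
  refine isStableNode_of_jacobian_eq hdiff hjac ?_ ?_
  · have h : (1 - 2 * (1 - C / (R0 * (C - V_L)))) * (C - vaccCost V_H V_L 0) - C / R0
        = C / R0 - (C - V_L) := by
      simp only [vaccCost]
      field_simp
      ring
    rw [h, sub_neg, div_lt_iff₀ hR0]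
    nlinarith
  · have h : (1 - 2 * 0) *
          (-(1 - C / (R0 * (C - V_L))) + (1 + θ) * (1 - (1 - C / (R0 * (C - V_L)))))
        = (2 + θ) * C / (R0 * (C - V_L)) - 1 := by ring
    rw [h, sub_neg, div_lt_one (by positivity)]
    exact hlo

lemma isStableNode_zero_one (hR0 : 1 < R0) (hθ : 0 < θ)
    (hf : ∀ x, x < 1 - 1 / R0 → f x = 1 - 1 / (R0 * (1 - x)))
    (hhi : R0 * (C - V_H) < C) :
    IsStableNode (coevField C θ (vaccCost V_H V_L) f) (0, 1) := by
  have hR0' : 0 < R0 := by linarith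
  obtain ⟨hdiff, hjac⟩ := jacobian_coevField_of_face (p := (0, 1)) hR0' hf
    (by rw [sub_pos, div_lt_one hR0']; exact hR0) (by simp)
  refine isStableNode_of_jacobian_eq hdiff hjac ?_ ?_
  · simp only [vaccCost]
    rw [sub_neg, lt_div_iff₀ hR0']
    linarith
  · linarith

end Equilibria

end

theorem stmt_14_general (C V_H V_L θ R0 : ℝ)
    (hCH : C > V_H) (hHL : V_H > V_L) (hL : V_L > 0) (hθ : θ > 0) (hR0 : R0 > 1)
    (V : ℝ → ℝ) (hV : ∀ n, V n = n * V_H + (1 - n) * V_L)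
    (f : ℝ → ℝ)
    (hf1 : ∀ x : ℝ, x < 1 - 1 / R0 → f x = 1 - 1 / (R0 * (1 - x)))
    (G : ℝ × ℝ → ℝ × ℝ)
    (hG : ∀ p : ℝ × ℝ, G p = (p.1 * (1 - p.1) * (f p.1 * C - V p.2),
        p.2 * (1 - p.2) * (-p.1 + (1 + θ) * (1 - p.1))))
    (hRlo : (2 + θ) * C / (C - V_L) < R0) (hRhi : R0 < C / (C - V_H))
    (J : ℝ × ℝ → Matrix (Fin 2) (Fin 2) ℝ)
    (hJ : ∀ p : ℝ × ℝ, J p =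
      !![(fderiv ℝ G p (1, 0)).1, (fderiv ℝ G p (0, 1)).1;
         (fderiv ℝ G p (1, 0)).2, (fderiv ℝ G p (0, 1)).2]) :
    (G (1 - C / (R0 * (C - V_L)), 0) = (0, 0) ∧ G (0, 1) = (0, 0)) ∧
    (∀ p ∈ ({((1 : ℝ) - C / (R0 * (C - V_L)), (0 : ℝ)), (0, 1)} : Set (ℝ × ℝ)),
      DifferentiableAt ℝ G p ∧
      ∃ lam1 lam2 : ℝ, lam1 < 0 ∧ lam2 < 0 ∧
        ∀ t : ℝ, Matrix.det (t • (1 : Matrix (Fin 2) (Fin 2) ℝ) - J p) =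
          (t - lam1) * (t - lam2)) := by
  obtain rfl : V = vaccCost V_H V_L := funext hV
  obtain rfl : G = coevField C θ (vaccCost V_H V_L) f := funext hG
  obtain rfl : J = jacobian (coevField C θ (vaccCost V_H V_L) f) := funext hJ
  have hCL : 0 < C - V_L := by linarith
  have hR : 0 < R0 := by linarith
  refine ⟨⟨coevField_interiorEq hR hL hCL hf1, by simp [coevField]⟩, ?_⟩
  rintro p (rfl | rfl)
  · exact isStableNode_interiorEq hR hL hCL hθ hf1 (by rwa [div_lt_iff₀ hCL] at hRlo)
  · exact isStableNode_zero_one hR0 hθ hf1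
      (by rwa [lt_div_iff₀ (by linarith)] at hRhi)

theorem stmt_14 (C V_H V_L θ R0 : ℝ)
    (hCH : C > V_H) (hHL : V_H > V_L) (hL : V_L > 0) (hθ : θ > 0) (hR0 : R0 > 1)
    (V : ℝ → ℝ) (hV : ∀ n, V n = n * V_H + (1 - n) * V_L)
    (f : ℝ → ℝ)
    (hf1 : ∀ x : ℝ, x < 1 - 1 / R0 → f x = 1 - 1 / (R0 * (1 - x)))
    (hf2 : ∀ x : ℝ, x ≥ 1 - 1 / R0 → f x = 0)
    (G : ℝ × ℝ → ℝ × ℝ)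
    (hG : ∀ p : ℝ × ℝ, G p = (p.1 * (1 - p.1) * (f p.1 * C - V p.2),
        p.2 * (1 - p.2) * (-p.1 + (1 + θ) * (1 - p.1))))
    (hcase : θ * (C - V_H) < 2 * V_H - V_L - C)
    (hRlo : (2 + θ) * C / (C - V_L) < R0) (hRhi : R0 < C / (C - V_H))
    (J : ℝ × ℝ → Matrix (Fin 2) (Fin 2) ℝ)
    (hJ : ∀ p : ℝ × ℝ, J p =
      !![(fderiv ℝ G p (1, 0)).1, (fderiv ℝ G p (0, 1)).1;
         (fderiv ℝ G p (1, 0)).2, (fderiv ℝ G p (0, 1)).2]) :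
    (G (1 - C / (R0 * (C - V_L)), 0) = (0, 0) ∧ G (0, 1) = (0, 0)) ∧
    (∀ p ∈ ({((1 : ℝ) - C / (R0 * (C - V_L)), (0 : ℝ)), (0, 1)} : Set (ℝ × ℝ)),
      DifferentiableAt ℝ G p ∧
      ∃ lam1 lam2 : ℝ, lam1 < 0 ∧ lam2 < 0 ∧
        ∀ t : ℝ, Matrix.det (t • (1 : Matrix (Fin 2) (Fin 2) ℝ) - J p) =
          (t - lam1) * (t - lam2)) :=
  stmt_14_general C V_H V_L θ R0 hCH hHL hL hθ hR0 V hV f hf1 G hG hRlo hRhi J hJ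
end

section
/- Assume x ≥ 1 - 1/R0, where R0 := β/(γ + μ). Then every equilibrium (S, I, R) of the SIR-with-vaccination system that satisfies S ≥ 0, I ≥ 0, R ≥ 0 has I = 0, and equals the disease-free equilibrium (1 - x, 0, x). -/
theorem stmt_16 (μ β γ x R0 : ℝ)
    (hμ : μ > 0) (hβ : β > 0) (hγ : γ > 0) (hx01 : x ∈ Set.Icc (0 : ℝ) 1)
    (hR0 : R0 = β / (γ + μ))
    (hx : x ≥ 1 - 1 / R0) :
    ∀ S I R : ℝ, 0 ≤ S → 0 ≤ I → 0 ≤ R →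
      μ * (1 - x) - β * S * I - μ * S = 0 →
      β * S * I - γ * I - μ * I = 0 →
      μ * x + γ * I - μ * R = 0 →
      I = 0 ∧ S = 1 - x ∧ R = x := by
  intro S I R hS hI hR e1 e2 e3
  have hγμ : γ + μ > 0 := by linarith
  have hx' : 1 - x ≤ (γ + μ) / β := by
    have : 1 / R0 = (γ + μ) / β := by
      rw [hR0, one_div_div]
    linarith [hx, this ▸ hx]
  have hI0 : I = 0 := by
    rcases eq_or_lt_of_le hI with h | h
    · exact h.symm
    · exfalso
      have hSval : S = (γ + μ) / β := by
        have : I * (β * S - (γ + μ)) = 0 := by ring_nf; linarith [e2]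
        have h2 : β * S - (γ + μ) = 0 := by
          rcases mul_eq_zero.mp this with h' | h'
          · exact absurd h' (ne_of_gt h)
          · exact h'
        field_simp
        linarith
      have hμS : μ * (1 - x) ≤ μ * S := by
        rw [hSval]; exact mul_le_mul_of_nonneg_left hx' hμ.le
      have : β * S = γ + μ := by
        rw [hSval]; field_simp
      nlinarith [mul_pos hγμ h]
  refine ⟨hI0, ?_, ?_⟩
  · subst hI0
    have : μ * (1 - x) = μ * S := by linarith
    have := mul_left_cancel₀ (ne_of_gt hμ) this
    linarith
  · subst hI0
    have : μ * x = μ * R := by linarith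
    have := mul_left_cancel₀ (ne_of_gt hμ) this
    linarith
end
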